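/- arXiv:2108.01209 — 5 statements merged into one kernel-verified Lean document; each statement's English description precedes it below -/
import Mathlib

section
/- Let q ≡ 11 (mod 24) be an odd prime power. Then there exists a pair of orthogonal one-factorizations 𝓕 and 𝓖 of the complete graph K_{q+1} such that for any two distinct one-factors F, G ∈ 𝓕 ∪ 𝓖, the union F ∪ G contains at most two cycles of length four. -/
/-!
Work over `K = 𝔽_q` with vertex set `K ∪ {∞}`. A starter is an involution `σ` of `K` fixing
only `0` such that `z ↦ σ z - z` is injective; the translates
`F_γ = {{∞, γ}} ∪ {{x, γ + σ (x - γ)}}` then form a one-factorization. Take `𝓕` from the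
patterned starter `σ = -id` and `𝓖` from Horton's starter `x ↦ 2^{±1} x` (exponent `+1` on
squares); `q ≡ 11 (mod 24)` makes `2` and `-1` non-squares and `3 ≠ 0`. Horton's starter is
strong (its pair sums are nonzero and distinct), which makes `𝓕` and `𝓖` orthogonal.

The union of two one-factors is a disjoint union of alternating cycles, so it suffices to
locate its four-cycles. Two patterned factors have none, a patterned and a Horton factor only
the one through `∞`, and for two Horton factors `G_γ, G_δ` the vertices of four-cycles are the
points of exact period two of `τ_δ ∘ τ_γ`, where `τ_γ x = γ + 2^{±1} (x - γ)` is affine on each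
square class; these points are told apart by the square classes they meet, leaving at most
eight of them.
-/

open SimpleGraph

namespace Paper

variable {V : Type*} {Γ : Type*} {F : Type*}

/-- A one-factor on vertex set `V`: a perfect matching, i.e. every vertex has a
unique neighbour. -/
def IsOneFactor (G : SimpleGraph V) : Prop :=
  ∀ v : V, ∃! w : V, G.Adj v w

/-- A one-factorization of the complete graph on `V`: a set of one-factors that are
pairwise edge-disjoint and whose edges cover all edges of the complete graph. -/
def IsOneFactorization (𝓕 : Set (SimpleGraph V)) : Prop :=
  (∀ G ∈ 𝓕, IsOneFactor G) ∧
  (∀ G ∈ 𝓕, ∀ H ∈ 𝓕, G ≠ H → Disjoint G.edgeSet H.edgeSet) ∧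
  (∀ u v : V, u ≠ v → ∃ G ∈ 𝓕, G.Adj u v)

/-- Two one-factorizations of the complete graph are orthogonal if any two of their
members share at most one edge. -/
def AreOrthogonalFactorizations (𝓕 𝓖 : Set (SimpleGraph V)) : Prop :=
  IsOneFactorization 𝓕 ∧ IsOneFactorization 𝓖 ∧
    ∀ G ∈ 𝓕, ∀ H ∈ 𝓖, (G.edgeSet ∩ H.edgeSet).Subsingleton

/-- `s` is the vertex set of a cycle of length four in `H`. -/
def IsFourCycleOn (H : SimpleGraph V) (s : Set V) : Prop :=
  ∃ a b c d : V, a ≠ b ∧ a ≠ c ∧ a ≠ d ∧ b ≠ c ∧ b ≠ d ∧ c ≠ d ∧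
    s = {a, b, c, d} ∧ H.Adj a b ∧ H.Adj b c ∧ H.Adj c d ∧ H.Adj d a

/-- The number of (vertex sets of) cycles of length four contained in `H`. -/
noncomputable def fourCycleCount (H : SimpleGraph V) : ℕ :=
  Set.ncard {s : Set V | IsFourCycleOn H s}

/-- The set of nonzero squares (quadratic residues) of a field. -/
def QRset (F : Type*) [Field F] : Set F := {x | x ≠ 0 ∧ IsSquare x}

/-- The set of non-squares (quadratic non-residues) of a field. -/
def NQRset (F : Type*) [Field F] : Set F := {x | ¬ IsSquare x}

/-- Horton's starter `S_β = {{x, xβ} : x ∈ QR(q)}`, as a set of unordered pairs. -/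
def hortonStarter [Field F] (β : F) : Set (Sym2 F) :=
  {e | ∃ x : F, x ≠ 0 ∧ IsSquare x ∧ e = s(x, x * β)}

/-- `-S_β = {{y, yβ} : y ∈ NQR(q)}`, as a set of unordered pairs. -/
def hortonNegStarter [Field F] (β : F) : Set (Sym2 F) :=
  {e | ∃ y : F, ¬ IsSquare y ∧ e = s(y, y * β)}

/-- The one-factor `F_γ = {{∞, γ}} ∪ {{x + γ, y + γ} : {x, y} ∈ S}` of the complete
graph on `Γ ∪ {∞}` (with `∞ = none`) obtained by translating the starter `S` by `γ`. -/
def starterFactor [AddCommGroup Γ] (S : Set (Sym2 Γ)) (γ : Γ) : SimpleGraph (Option Γ) :=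
  SimpleGraph.fromEdgeSet
    ({s((none : Option Γ), some γ)} ∪ (Sym2.map (fun x => some (x + γ)) '' S))

/-- A starter for an additive abelian group: every nonzero element of the group
appears in exactly one pair, all elements appearing in pairs are nonzero, and every
nonzero difference arises from exactly one ordered pair. -/
def IsStarter [AddCommGroup Γ] (S : Set (Sym2 Γ)) : Prop :=
  (∀ z : Γ, z ≠ 0 → ∃! e : Sym2 Γ, e ∈ S ∧ z ∈ e) ∧
  (∀ e ∈ S, ∀ z ∈ e, z ≠ (0 : Γ)) ∧
  (∀ d : Γ, d ≠ 0 → ∃! p : Γ × Γ, s(p.1, p.2) ∈ S ∧ p.1 - p.2 = d)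

/-- A strong starter: a starter whose pair sums are nonzero and pairwise distinct. -/
def IsStrongStarter [AddCommGroup Γ] (S : Set (Sym2 Γ)) : Prop :=
  IsStarter S ∧
  (∀ x y : Γ, s(x, y) ∈ S → x + y ≠ 0) ∧
  (∀ x y u v : Γ, s(x, y) ∈ S → s(u, v) ∈ S → x + y = u + v → s(x, y) = s(u, v))

/-- Two starters are orthogonal if, writing `(x_d, y_d) ∈ S` and `(u_d, v_d) ∈ T`
for the ordered pairs with difference `d ≠ 0`, one has `u_d ≠ x_d` for all `d`, and
`u_d - x_d = u_e - x_e` implies `d = e`. -/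
def AreOrthogonalStarters [AddCommGroup Γ] (S T : Set (Sym2 Γ)) : Prop :=
  (∀ d x y u v : Γ, d ≠ 0 → s(x, y) ∈ S → s(u, v) ∈ T → x - y = d → u - v = d → u ≠ x) ∧
  (∀ d e x y u v x' y' u' v' : Γ, d ≠ 0 → e ≠ 0 →
    s(x, y) ∈ S → s(u, v) ∈ T → x - y = d → u - v = d →
    s(x', y') ∈ S → s(u', v') ∈ T → x' - y' = e → u' - v' = e →
    u - x = u' - x' → d = e)

open Function

section FourCycles

variable {H : SimpleGraph V} {s : Set V}

lemma IsFourCycleOn.ncard_eq (h : IsFourCycleOn H s) : s.ncard = 4 := by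
  obtain ⟨a, b, c, d, hab, hac, had, hbc, hbd, hcd, rfl, -⟩ := h
  rw [Set.ncard_insert_of_notMem (by simp [hab, hac, had]),
    Set.ncard_insert_of_notMem (by simp [hbc, hbd]), Set.ncard_pair hcd]

lemma IsFourCycleOn.exists_rotation (h : IsFourCycleOn H s) {v : V} (hv : v ∈ s) :
    ∃ b c d : V, v ≠ b ∧ v ≠ c ∧ v ≠ d ∧ b ≠ c ∧ b ≠ d ∧ c ≠ d ∧
      s = {v, b, c, d} ∧ H.Adj v b ∧ H.Adj b c ∧ H.Adj c d ∧ H.Adj d v := by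
  obtain ⟨a, b, c, d, hab, hac, had, hbc, hbd, hcd, rfl, h₁, h₂, h₃, h₄⟩ := h
  simp only [Set.mem_insert_iff, Set.mem_singleton_iff] at hv
  rcases hv with rfl | rfl | rfl | rfl
  · exact ⟨b, c, d, hab, hac, had, hbc, hbd, hcd, rfl, h₁, h₂, h₃, h₄⟩
  · refine ⟨c, d, a, hbc, hbd, hab.symm, hcd, hac.symm, had.symm, ?_, h₂, h₃, h₄, h₁⟩
    ext; simp only [Set.mem_insert_iff, Set.mem_singleton_iff]; tauto
  · refine ⟨d, a, b, hcd, hac.symm, hbc.symm, had.symm, hbd.symm, hab, ?_, h₃, h₄, h₁, h₂⟩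
    ext; simp only [Set.mem_insert_iff, Set.mem_singleton_iff]; tauto
  · refine ⟨a, b, c, had.symm, hbd.symm, hcd.symm, hab, hac, hbc, ?_, h₄, h₁, h₂, h₃⟩
    ext; simp only [Set.mem_insert_iff, Set.mem_singleton_iff]; tauto

lemma fourCycleCount_le_one_of_forall_mem [Finite V]
    (hdisj : {s | IsFourCycleOn H s}.PairwiseDisjoint id) {v : V}
    (hv : ∀ s, IsFourCycleOn H s → v ∈ s) : fourCycleCount H ≤ 1 :=
  (Set.ncard_le_one_iff (Set.toFinite _)).mpr fun {s t} hs ht =>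
    hdisj.elim hs ht (Set.not_disjoint_iff.mpr ⟨v, hv s hs, hv t ht⟩)

lemma four_mul_fourCycleCount_le [Finite V]
    (hdisj : {s | IsFourCycleOn H s}.PairwiseDisjoint id) {C : Set V}
    (hC : ∀ s, IsFourCycleOn H s → s ⊆ C) : 4 * fourCycleCount H ≤ C.ncard := by
  have hfin : {s | IsFourCycleOn H s}.Finite := Set.toFinite _
  calc 4 * fourCycleCount H
      = ∑ᶠ s ∈ {s | IsFourCycleOn H s}, s.ncard := by
        rw [fourCycleCount, ← finsum_one, mul_finsum_mem]
        exact finsum_mem_congr rfl fun s hs => (IsFourCycleOn.ncard_eq hs).symm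
    _ = (⋃ s ∈ {s | IsFourCycleOn H s}, s).ncard :=
        (hfin.ncard_biUnion (fun _ _ => Set.toFinite _) hdisj).symm
    _ ≤ C.ncard := Set.ncard_le_ncard (Set.iUnion₂_subset hC)

end FourCycles

section InvolutionGraph

variable {f g : V → V}

def involutionGraph (f : V → V) : SimpleGraph V :=
  SimpleGraph.fromRel fun u v => f u = v

lemma involutionGraph_adj (hf : Involutive f) {u v : V} :
    (involutionGraph f).Adj u v ↔ u ≠ v ∧ f u = v := by
  simp only [involutionGraph, fromRel_adj, and_congr_right_iff]
  rintro -
  exact ⟨fun h => h.elim id fun h => h ▸ hf v, Or.inl⟩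

lemma isOneFactor_involutionGraph (hf : Involutive f) (hfix : ∀ v, f v ≠ v) :
    IsOneFactor (involutionGraph f) := fun v =>
  ⟨f v, (involutionGraph_adj hf).mpr ⟨(hfix v).symm, rfl⟩,
    fun _ hw => ((involutionGraph_adj hf).mp hw).2.symm⟩

lemma sup_involutionGraph_adj (hf : Involutive f) (hg : Involutive g) {u v : V} :
    (involutionGraph f ⊔ involutionGraph g).Adj u v ↔ u ≠ v ∧ (f u = v ∨ g u = v) := by
  rw [sup_adj, involutionGraph_adj hf, involutionGraph_adj hg, ← and_or_left]

lemma IsFourCycleOn.eq_alternating (hf : Involutive f) (hg : Involutive g) {s : Set V}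
    (h : IsFourCycleOn (involutionGraph f ⊔ involutionGraph g) s) {v : V} (hv : v ∈ s) :
    s = {v, f v, g (f v), f (g (f v))} ∧ g (f (g (f v))) = v ∧ g (f v) ≠ v ∧
      f (g (f v)) ≠ v := by
  obtain ⟨b, c, d, hvb, hvc, hvd, -, hbd, -, rfl, h₁, h₂, h₃, h₄⟩ := h.exists_rotation hv
  simp only [sup_involutionGraph_adj hf hg] at h₁ h₂ h₃ h₄
  have flip : ∀ {x y}, (f x = y ∨ g x = y) → (f y = x ∨ g y = x) :=
    Or.imp (fun h => h ▸ hf _) (fun h => h ▸ hg _)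
  have oriented : ∀ {b d}, f v = b → g v = d → (f b = c ∨ g b = c) → (f c = d ∨ g c = d) →
      g (f v) = c ∧ f c = d ∧ g d = v := by
    rintro b d rfl rfl hbc hcd
    exact ⟨hbc.resolve_left fun h => hvc (hf v ▸ h),
      hcd.resolve_right fun h => hvc (hg.injective h).symm, hg v⟩
  rcases h₁.2 with hb | hb
  · have hd : g v = d := (flip h₄.2).resolve_left fun h => hbd (hb.symm.trans h)
    obtain ⟨hc, hd', hv'⟩ := oriented hb hd h₂.2 h₃.2
    subst hb hc hd'
    exact ⟨rfl, hv', hvc.symm, hvd.symm⟩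
  · have hd : f v = d := (flip h₄.2).resolve_right fun h => hbd (hb.symm.trans h)
    obtain ⟨hc, hb', hv'⟩ := oriented hd hb (flip h₃.2) (flip h₂.2)
    subst hd hc hb'
    refine ⟨?_, hv', hvc.symm, hvb.symm⟩
    ext; simp only [Set.mem_insert_iff, Set.mem_singleton_iff]; tauto

lemma pairwiseDisjoint_fourCycles_involutionGraph (hf : Involutive f) (hg : Involutive g) :
    {s | IsFourCycleOn (involutionGraph f ⊔ involutionGraph g) s}.PairwiseDisjoint id :=
  fun _ hs _ ht hst => Set.disjoint_left.mpr fun _ hvs hvt =>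
    hst ((hs.eq_alternating hf hg hvs).1.trans (ht.eq_alternating hf hg hvt).1.symm)

end InvolutionGraph

section Starter

variable [AddCommGroup Γ] {σ : Γ → Γ}

def translateConj (σ : Γ → Γ) (γ x : Γ) : Γ := σ (x - γ) + γ

def alternatingMap (σ τ : Γ → Γ) (γ δ : Γ) : Γ → Γ :=
  translateConj τ δ ∘ translateConj σ γ

structure IsStarterInvolution (σ : Γ → Γ) : Prop where
  involutive : Involutive σ
  map_zero : σ 0 = 0
  sub_injective : Injective fun z => σ z - z

namespace IsStarterInvolution

variable (hσ : IsStarterInvolution σ)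
include hσ

lemma eq_zero_of_map_eq_self {z : Γ} (hz : σ z = z) : z = 0 :=
  hσ.sub_injective (by simp [hz, hσ.map_zero])

lemma translateConj_involutive (γ : Γ) : Involutive (translateConj σ γ) := fun x => by
  simp [translateConj, hσ.involutive (x - γ)]

lemma translateConj_ne {γ x : Γ} (hx : x ≠ γ) : translateConj σ γ x ≠ γ := fun h =>
  hx <| sub_eq_zero.mp <| hσ.involutive.injective <| by
    rw [hσ.map_zero]; exact add_eq_right.mp h

/-- Against the patterned starter, `z ↦ σ z - z` takes the same value at the two points
`b - δ`, `d - δ` of an alternating square `a, b, c, d`; hence `b = d`. -/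
lemma alternatingMap_neg_eq_of_periodic {γ δ a : Γ}
    (h : alternatingMap Neg.neg σ γ δ (alternatingMap Neg.neg σ γ δ a) = a) :
    alternatingMap Neg.neg σ γ δ a = a := by
  simp only [alternatingMap, comp_apply] at h ⊢
  set b := translateConj Neg.neg γ a
  set c := translateConj σ δ b
  set d := translateConj Neg.neg γ c
  have hc : σ (b - δ) = c - δ := eq_sub_of_add_eq rfl
  have ha : σ (d - δ) = a - δ := eq_sub_of_add_eq h
  have hbd : b = d := sub_left_injective <| hσ.sub_injective <| by
    show σ (b - δ) - (b - δ) = σ (d - δ) - (d - δ)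
    rw [hc, ha]
    simp only [b, d, translateConj]
    abel
  have := congrArg (translateConj Neg.neg γ) hbd
  simpa [b, d, translateConj, eq_comm] using this

end IsStarterInvolution

variable [DecidableEq Γ]

/-- The matching `F_γ` of a starter `{{z, σ z}}` on `Γ ∪ {∞}`, with `∞ = none`. -/
def starterInvolution (σ : Γ → Γ) (γ : Γ) : Option Γ → Option Γ
  | none => some γ
  | some x => if x = γ then none else some (translateConj σ γ x)

def starterGraph (σ : Γ → Γ) (γ : Γ) : SimpleGraph (Option Γ) :=
  involutionGraph (starterInvolution σ γ)

@[simp] lemma starterInvolution_none (γ : Γ) : starterInvolution σ γ none = some γ := rfl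

@[simp] lemma starterInvolution_self (γ : Γ) : starterInvolution σ γ (some γ) = none := by
  simp [starterInvolution]

lemma starterInvolution_of_ne {γ x : Γ} (hx : x ≠ γ) :
    starterInvolution σ γ (some x) = some (translateConj σ γ x) := by
  simp [starterInvolution, hx]

lemma starterInvolution_eq_some {γ x y : Γ} :
    starterInvolution σ γ (some x) = some y ↔ x ≠ γ ∧ translateConj σ γ x = y := by
  by_cases hx : x = γ <;> simp [starterInvolution, hx]

lemma starterInvolution_eq_none {γ : Γ} {u : Option Γ} :
    starterInvolution σ γ u = none ↔ u = some γ := by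
  cases u with
  | none => simp
  | some x => by_cases hx : x = γ <;> simp [starterInvolution, hx]

namespace IsStarterInvolution

variable (hσ : IsStarterInvolution σ)
include hσ

lemma starterInvolution_involutive (γ : Γ) : Involutive (starterInvolution σ γ)
  | none => by simp
  | some x => by
    by_cases hx : x = γ
    · simp [hx]
    · rw [starterInvolution_of_ne hx, starterInvolution_of_ne (hσ.translateConj_ne hx),
        hσ.translateConj_involutive]

lemma starterInvolution_ne_self (γ : Γ) : ∀ u, starterInvolution σ γ u ≠ u
  | none => by simp
  | some x => by
    by_cases hx : x = γ
    · simp [hx]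
    · rw [starterInvolution_of_ne hx, ne_eq, Option.some.injEq, translateConj,
        ← eq_sub_iff_add_eq]
      exact fun h => hx (sub_eq_zero.mp (hσ.eq_zero_of_map_eq_self h))

lemma starterGraph_adj {γ : Γ} {u v : Option Γ} :
    (starterGraph σ γ).Adj u v ↔ u ≠ v ∧ starterInvolution σ γ u = v :=
  involutionGraph_adj (hσ.starterInvolution_involutive γ)

/-- A pair `{x, y}` lies in at most one translate of the starter, because `σ z - z = y - x`
has at most one solution. -/
lemma starterInvolution_left_injective (u : Option Γ) :
    Injective fun γ => starterInvolution σ γ u := by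
  intro γ δ h
  dsimp only at h
  cases u with
  | none => simpa using h
  | some x =>
    rcases eq_or_ne x γ with rfl | hxγ <;> rcases eq_or_ne x δ with rfl | hxδ
    · rfl
    · simp [starterInvolution_of_ne hxδ] at h
    · simp [starterInvolution_of_ne hxγ] at h
    rw [starterInvolution_of_ne hxγ, starterInvolution_of_ne hxδ, Option.some.injEq] at h
    have hsub : σ (x - γ) - (x - γ) = σ (x - δ) - (x - δ) := by
      convert congrArg (· - x) h using 1 <;> simp only [translateConj] <;> abel
    exact sub_right_injective (hσ.sub_injective hsub)

lemma disjoint_starterGraph {γ δ : Γ} (hγδ : γ ≠ δ) :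
    Disjoint (starterGraph σ γ) (starterGraph σ δ) :=
  SimpleGraph.disjoint_left.mpr fun _ _ hγ hδ =>
    hγδ (hσ.starterInvolution_left_injective _
      (((hσ.starterGraph_adj).mp hγ).2.trans ((hσ.starterGraph_adj).mp hδ).2.symm))

lemma exists_starterGraph_adj [Finite Γ] {u v : Option Γ} (huv : u ≠ v) :
    ∃ γ, (starterGraph σ γ).Adj u v := by
  simp only [hσ.starterGraph_adj, huv, ne_eq, not_false_eq_true, true_and]
  match u, v with
  | none, none => exact absurd rfl huv
  | none, some y => exact ⟨y, rfl⟩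
  | some x, none => exact ⟨x, by simp⟩
  | some x, some y =>
    obtain ⟨z, hz⟩ := (Finite.injective_iff_surjective.mp hσ.sub_injective) (y - x)
    have hz0 : z ≠ 0 := by
      rintro rfl
      simp [hσ.map_zero, sub_eq_zero, eq_comm] at hz
      exact huv (congrArg some hz)
    refine ⟨x - z, starterInvolution_eq_some.mpr ⟨fun h => hz0 ?_, ?_⟩⟩
    · simpa using (sub_eq_self.mp h.symm)
    · simp only [translateConj, sub_sub_cancel] at hz ⊢
      rw [← sub_add_cancel y x, ← hz]
      abel

theorem isOneFactorization_range_starterGraph [Finite Γ] :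
    IsOneFactorization (Set.range (starterGraph σ)) := by
  refine ⟨?_, ?_, fun u v huv => ?_⟩
  · rintro _ ⟨γ, rfl⟩
    exact isOneFactor_involutionGraph (hσ.starterInvolution_involutive γ)
      (hσ.starterInvolution_ne_self γ)
  · rintro _ ⟨γ, rfl⟩ _ ⟨δ, rfl⟩ hne
    exact disjoint_edgeSet.mpr (hσ.disjoint_starterGraph fun h => hne (h ▸ rfl))
  · obtain ⟨γ, hγ⟩ := hσ.exists_starterGraph_adj huv
    exact ⟨_, ⟨γ, rfl⟩, hγ⟩

end IsStarterInvolution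

end Starter

section StarterFourCycles

variable [AddCommGroup Γ] [DecidableEq Γ] {σ τ : Γ → Γ}

lemma starterInvolution_of_ne_none {γ x : Γ} (h : starterInvolution σ γ (some x) ≠ none) :
    starterInvolution σ γ (some x) = some (translateConj σ γ x) :=
  starterInvolution_of_ne fun hx => h (hx ▸ starterInvolution_self x)

lemma IsFourCycleOn.translateConj_eq_of_none_mem (hσ : IsStarterInvolution σ)
    (hτ : IsStarterInvolution τ) {γ δ : Γ} {s : Set (Option Γ)}
    (h : IsFourCycleOn (starterGraph σ γ ⊔ starterGraph τ δ) s) (hs : none ∈ s) :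
    γ ≠ δ ∧ translateConj σ γ (translateConj τ δ γ) = δ := by
  obtain ⟨-, hclose, hc, hd⟩ := h.eq_alternating (hσ.starterInvolution_involutive γ)
    (hτ.starterInvolution_involutive δ) hs
  simp only [starterInvolution_none] at hclose hc hd
  have hγδ : γ ≠ δ := by rintro rfl; simp at hc
  rw [starterInvolution_of_ne hγδ] at hclose hd
  rw [starterInvolution_of_ne_none hd, starterInvolution_eq_none, Option.some.injEq] at hclose
  exact ⟨hγδ, hclose⟩

lemma IsFourCycleOn.periodic_of_none_notMem (hσ : IsStarterInvolution σ)
    (hτ : IsStarterInvolution τ) {γ δ : Γ} {s : Set (Option Γ)}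
    (h : IsFourCycleOn (starterGraph σ γ ⊔ starterGraph τ δ) s) (hs : none ∉ s) {a : Γ}
    (ha : some a ∈ s) :
    alternatingMap σ τ γ δ (alternatingMap σ τ γ δ a) = a ∧ alternatingMap σ τ γ δ a ≠ a := by
  obtain ⟨hset, hclose, hc, -⟩ := h.eq_alternating (hσ.starterInvolution_involutive γ)
    (hτ.starterInvolution_involutive δ) ha
  have hne : ∀ u ∈ s, u ≠ none := fun u hu h => hs (h ▸ hu)
  rw [hset] at hne
  simp only [Set.mem_insert_iff, Set.mem_singleton_iff, forall_eq_or_imp, forall_eq] at hne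
  obtain ⟨-, h₁, h₂, h₃⟩ := hne
  rw [starterInvolution_of_ne_none h₁] at h₂ h₃ hclose hc
  rw [starterInvolution_of_ne_none h₂] at h₃ hclose hc
  rw [starterInvolution_of_ne_none h₃] at hclose
  rw [starterInvolution_of_ne_none (hclose ▸ Option.some_ne_none a)] at hclose
  exact ⟨Option.some_injective _ hclose, fun h => hc (congrArg some h)⟩

lemma IsFourCycleOn.none_mem_of_neg (hneg : IsStarterInvolution (Neg.neg : Γ → Γ))
    (hτ : IsStarterInvolution τ) {γ δ : Γ} {s : Set (Option Γ)}
    (h : IsFourCycleOn (starterGraph Neg.neg γ ⊔ starterGraph τ δ) s) :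
    none ∈ s := by
  by_contra hs
  obtain ⟨v, _, _, _, -, -, -, -, -, -, hset, -⟩ := id h
  have hv : v ∈ s := hset ▸ Set.mem_insert v _
  obtain ⟨a, rfl⟩ := Option.ne_none_iff_exists'.mp fun h' => hs (h' ▸ hv)
  obtain ⟨hper, hfix⟩ := h.periodic_of_none_notMem hneg hτ hs hv
  exact hfix (hτ.alternatingMap_neg_eq_of_periodic hper)

lemma fourCycleCount_starterGraph_neg_sup_le_one [Finite Γ]
    (hneg : IsStarterInvolution (Neg.neg : Γ → Γ)) (hτ : IsStarterInvolution τ) (γ δ : Γ) :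
    fourCycleCount (starterGraph Neg.neg γ ⊔ starterGraph τ δ) ≤ 1 :=
  fourCycleCount_le_one_of_forall_mem
    (pairwiseDisjoint_fourCycles_involutionGraph (hneg.starterInvolution_involutive γ)
      (hτ.starterInvolution_involutive δ)) fun _ hs => hs.none_mem_of_neg hneg hτ

end StarterFourCycles

section Orthogonal

variable [AddCommGroup Γ] {σ : Γ → Γ}

structure IsStrongStarterInvolution (σ : Γ → Γ) : Prop extends IsStarterInvolution σ where
  add_map_ne_zero : ∀ z, z ≠ 0 → z + σ z ≠ 0
  eq_or_eq_of_add_map_eq : ∀ z z', z + σ z = z' + σ z' → z' = z ∨ z' = σ z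

variable [DecidableEq Γ]

lemma eq_or_exists_of_adj_neg_of_adj (hneg : IsStarterInvolution (Neg.neg : Γ → Γ))
    (hσ : IsStarterInvolution σ) {γ δ : Γ} {u v : Option Γ}
    (h₁ : (starterGraph Neg.neg γ).Adj u v) (h₂ : (starterGraph σ δ).Adj u v) :
    (γ = δ ∧ s(u, v) = s(none, some γ)) ∨
      ∃ z, z ≠ 0 ∧ z + σ z = (γ - δ) + (γ - δ) ∧ s(u, v) = s(some (z + δ), some (σ z + δ)) := by
  obtain ⟨-, h₁⟩ := hneg.starterGraph_adj.mp h₁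
  obtain ⟨-, h₂⟩ := hσ.starterGraph_adj.mp h₂
  match u, v with
  | none, v =>
    subst h₁
    exact Or.inl ⟨(Option.some_injective _ h₂).symm, rfl⟩
  | some x, none =>
    rw [starterInvolution_eq_none, Option.some.injEq] at h₁ h₂
    exact Or.inl ⟨h₁.symm.trans h₂, by rw [h₁, Sym2.eq_swap]⟩
  | some x, some y =>
    obtain ⟨-, hy₁⟩ := starterInvolution_eq_some.mp h₁
    obtain ⟨hxδ, hy₂⟩ := starterInvolution_eq_some.mp h₂
    refine Or.inr ⟨x - δ, sub_ne_zero.mpr hxδ, ?_, ?_⟩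
    · rw [eq_sub_of_add_eq hy₂, ← hy₁, translateConj]
      abel
    · rw [sub_add_cancel]
      exact congrArg _ (congrArg some hy₂.symm)

theorem subsingleton_edgeSet_inter_starterGraph_neg
    (hneg : IsStarterInvolution (Neg.neg : Γ → Γ)) (hσ : IsStrongStarterInvolution σ)
    (γ δ : Γ) : ((starterGraph Neg.neg γ).edgeSet ∩ (starterGraph σ δ).edgeSet).Subsingleton := by
  rintro e ⟨he₁, he₂⟩ e' ⟨he₁', he₂'⟩
  induction e using Sym2.ind with | _ u v =>
  induction e' using Sym2.ind with | _ u' v' =>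
  rcases eq_or_exists_of_adj_neg_of_adj hneg hσ.1 he₁ he₂ with ⟨hγδ, he⟩ | ⟨z, hz, hsum, he⟩ <;>
    rcases eq_or_exists_of_adj_neg_of_adj hneg hσ.1 he₁' he₂' with
      ⟨hγδ', he'⟩ | ⟨z', hz', hsum', he'⟩
  · rw [he, he']
  · exact absurd (by simpa [hγδ] using hsum') (hσ.add_map_ne_zero z' hz')
  · exact absurd (by simpa [hγδ'] using hsum) (hσ.add_map_ne_zero z hz)
  · rw [he, he']
    rcases hσ.eq_or_eq_of_add_map_eq z z' (hsum.trans hsum'.symm) with rfl | rfl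
    · rfl
    · rw [hσ.involutive z, Sym2.eq_swap]

end Orthogonal

section FieldStarters

variable {K : Type*} [Field K]

lemma isStarterInvolution_neg (h2 : (2 : K) ≠ 0) : IsStarterInvolution (Neg.neg : K → K) where
  involutive := neg_involutive
  map_zero := neg_zero
  sub_injective z z' h := by
    have : 2 * (z' - z) = 0 := by simp only at h; linear_combination h
    exact (sub_eq_zero.mp ((mul_eq_zero.mp this).resolve_left h2)).symm

lemma fourCycleCount_starterGraph_neg_sup_neg [DecidableEq K] (h2 : (2 : K) ≠ 0)
    (h3 : (3 : K) ≠ 0) (γ δ : K) :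
    fourCycleCount (starterGraph Neg.neg γ ⊔ starterGraph Neg.neg δ) = 0 := by
  have hneg := isStarterInvolution_neg h2
  rw [fourCycleCount, ← Set.ncard_empty (Set (Option K))]
  refine congrArg _ (Set.eq_empty_of_forall_notMem fun s hs => ?_)
  obtain ⟨hγδ, h⟩ := hs.translateConj_eq_of_none_mem hneg hneg (hs.none_mem_of_neg hneg hneg)
  have : 3 * (γ - δ) = 0 := by simp only [translateConj] at h; linear_combination h
  exact hγδ (sub_eq_zero.mp ((mul_eq_zero.mp this).resolve_left h3))

lemma isSquare_mul_iff_of_not_isSquare [Fintype K] {a b : K} (ha : a ≠ 0) (hb : ¬IsSquare b) :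
    IsSquare (b * a) ↔ ¬IsSquare a := by
  classical
  have hb0 : b ≠ 0 := fun h => hb (h ▸ IsSquare.zero)
  rw [← quadraticChar_one_iff_isSquare (mul_ne_zero hb0 ha), map_mul,
    quadraticChar_neg_one_iff_not_isSquare.mpr hb, ← quadraticChar_neg_one_iff_not_isSquare]
  rcases quadraticChar_dichotomy (F := K) ha with h | h <;> rw [h] <;> norm_num

def hortonMult (μ : K) : Bool → K
  | true => μ
  | false => μ⁻¹

open scoped Classical in
/-- Horton's starter `{{x, μ x} : x a nonzero square}`, as the involution `x ↦ μ^{±1} x`. -/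
noncomputable def hortonMap (μ z : K) : K := hortonMult μ (decide (IsSquare z)) * z

lemma hortonMap_of_isSquare {μ z : K} (h : IsSquare z) : hortonMap μ z = μ * z := by
  simp [hortonMap, hortonMult, h]

lemma hortonMap_of_not_isSquare {μ z : K} (h : ¬IsSquare z) : hortonMap μ z = μ⁻¹ * z := by
  simp [hortonMap, hortonMult, h]

lemma hortonMap_zero (μ : K) : hortonMap μ 0 = 0 := by simp [hortonMap]

end FieldStarters

section HortonStarter

variable {K : Type*} [Field K] [Fintype K] {μ : K}

lemma not_isSquare_hortonMap (hμ : ¬IsSquare μ) {z : K} (hz : z ≠ 0) (hs : IsSquare z) :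
    ¬IsSquare (hortonMap μ z) := by
  rw [hortonMap_of_isSquare hs, isSquare_mul_iff_of_not_isSquare hz hμ, not_not]
  exact hs

lemma isSquare_hortonMap (hμ : ¬IsSquare μ) {z : K} (hz : z ≠ 0) (hs : ¬IsSquare z) :
    IsSquare (hortonMap μ z) := by
  rw [hortonMap_of_not_isSquare hs,
    isSquare_mul_iff_of_not_isSquare hz (fun h => hμ (isSquare_inv.mp h))]
  exact hs

lemma hortonMap_involutive (hμ : ¬IsSquare μ) : Involutive (hortonMap μ) := by
  have hμ0 : μ ≠ 0 := fun h => hμ (h ▸ IsSquare.zero)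
  intro z
  by_cases hz : z = 0
  · simp [hz, hortonMap_zero]
  by_cases hs : IsSquare z
  · rw [hortonMap_of_not_isSquare (not_isSquare_hortonMap hμ hz hs), hortonMap_of_isSquare hs,
      inv_mul_cancel_left₀ hμ0]
  · rw [hortonMap_of_isSquare (isSquare_hortonMap hμ hz hs), hortonMap_of_not_isSquare hs,
      mul_inv_cancel_left₀ hμ0]

theorem isStarterInvolution_hortonMap (hμ : ¬IsSquare μ) (hneg : ¬IsSquare (-1 : K)) :
    IsStarterInvolution (hortonMap μ) := by
  have hμ0 : μ ≠ 0 := fun h => hμ (h ▸ IsSquare.zero)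
  have hμ1' : μ - 1 ≠ 0 := sub_ne_zero.mpr fun h => hμ (h ▸ IsSquare.one)
  have hinv : μ * μ⁻¹ = 1 := mul_inv_cancel₀ hμ0
  have hμinv : ¬IsSquare μ⁻¹ := fun h => hμ (isSquare_inv.mp h)
  refine ⟨hortonMap_involutive hμ, hortonMap_zero μ, fun z z' h => ?_⟩
  have mixed : ∀ {z z' : K}, IsSquare z → ¬IsSquare z' → μ * z - z ≠ μ⁻¹ * z' - z' := by
    intro z z' hz hz' h
    have : (μ - 1) * (z' + μ * z) = 0 := by linear_combination μ * h + z' * hinv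
    have hz'eq : z' = -1 * (μ * z) := by linear_combination (mul_eq_zero.mp this).resolve_left hμ1'
    rcases eq_or_ne z 0 with rfl | hz0
    · exact hz' (by simp [hz'eq])
    · rw [hz'eq, isSquare_mul_iff_of_not_isSquare (mul_ne_zero hμ0 hz0) hneg,
        isSquare_mul_iff_of_not_isSquare hz0 hμ] at hz'
      exact hz' (not_not.mpr hz)
  simp only at h
  by_cases hz : IsSquare z <;> by_cases hz' : IsSquare z' <;>
    simp only [hortonMap_of_isSquare, hortonMap_of_not_isSquare, hz, hz', not_false_eq_true]
      at h
  · exact mul_left_cancel₀ hμ1' (by linear_combination h)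
  · exact absurd h (mixed hz hz')
  · exact absurd h.symm (mixed hz' hz)
  · have hμinv1 : μ⁻¹ - 1 ≠ 0 := sub_ne_zero.mpr fun h => hμinv (h ▸ IsSquare.one)
    exact mul_left_cancel₀ hμinv1 (by linear_combination h)

theorem isStrongStarterInvolution_hortonMap (hμ : ¬IsSquare μ) (hneg : ¬IsSquare (-1 : K))
    (hμ1 : μ ≠ -1) : IsStrongStarterInvolution (hortonMap μ) := by
  have hμ0 : μ ≠ 0 := fun h => hμ (h ▸ IsSquare.zero)
  have hμ1' : μ + 1 ≠ 0 := fun h => hμ1 (eq_neg_of_add_eq_zero_left h)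
  have hinv : μ * μ⁻¹ = 1 := mul_inv_cancel₀ hμ0
  refine ⟨isStarterInvolution_hortonMap hμ hneg, fun z hz h => ?_, fun z z' h => ?_⟩
  · have : (μ + 1) * z = 0 := by
      by_cases hs : IsSquare z
      · rw [hortonMap_of_isSquare hs] at h
        linear_combination h
      · rw [hortonMap_of_not_isSquare hs] at h
        linear_combination μ * h - z * hinv
    exact (mul_eq_zero.mp this).elim hμ1' hz
  · have key : ∀ {w : K}, (μ + 1) * (z' - w) = 0 → z' = w := fun h =>
      sub_eq_zero.mp ((mul_eq_zero.mp h).resolve_left hμ1')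
    by_cases hz : IsSquare z <;> by_cases hz' : IsSquare z' <;>
      simp only [hortonMap_of_isSquare, hortonMap_of_not_isSquare, hz, hz', not_false_eq_true]
        at h ⊢
    · exact Or.inl (key (by linear_combination -h))
    · exact Or.inr (key (by linear_combination -μ * h - z' * hinv))
    · exact Or.inr (key (by linear_combination -h - z * hinv))
    · exact Or.inl (key (by linear_combination -μ * h - (z' - z) * hinv))

end HortonStarter

section HortonSquares

variable {K : Type*} [Field K] {μ : K}

lemma alternating_affine_identity {s₁ s₂ s₃ s₄ a b c d γ δ : K}
    (h₁ : b - γ = s₁ * (a - γ)) (h₂ : c - δ = s₂ * (b - δ)) (h₃ : d - γ = s₃ * (c - γ))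
    (h₄ : a - δ = s₄ * (d - δ)) :
    (s₁ * s₂ * s₃ * s₄ - 1) * (a - γ) = (γ - δ) * (1 - s₄ + s₃ * s₄ - s₂ * s₃ * s₄) := by
  linear_combination -(h₄ + s₄ * h₃ + s₄ * s₃ * h₂ + s₄ * s₃ * s₂ * h₁)

open scoped Classical in
lemma translateConj_hortonMap_sub (μ γ x : K) :
    translateConj (hortonMap μ) γ x - γ = hortonMult μ (decide (IsSquare (x - γ))) * (x - γ) :=
  add_sub_cancel_right _ _

open scoped Classical in
/-- The square classes met along the alternating square `a, b, c, d` starting at `a`. -/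
noncomputable def hortonPattern (μ γ δ a : K) : Fin 4 → Bool :=
  let b := translateConj (hortonMap μ) γ a
  let c := alternatingMap (hortonMap μ) (hortonMap μ) γ δ a
  ![IsSquare (a - γ), IsSquare (b - δ), IsSquare (c - γ),
    IsSquare (translateConj (hortonMap μ) γ c - δ)]

def hortonDefect (μ : K) (p : Fin 4 → Bool) : K :=
  1 - hortonMult μ (p 3) + hortonMult μ (p 2) * hortonMult μ (p 3) -
    hortonMult μ (p 1) * hortonMult μ (p 2) * hortonMult μ (p 3)

lemma prod_hortonMult_ne_one (hμ0 : μ ≠ 0) (hμ2 : μ ^ 2 ≠ 1) (hμ4 : μ ^ 4 ≠ 1)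
    {p : Fin 4 → Bool} (hp : ∑ i, (p i).toNat ≠ 2) : ∏ i, hortonMult μ (p i) ≠ 1 := by
  rw [Fin.prod_univ_four]
  cases h₀ : p 0 <;> cases h₁ : p 1 <;> cases h₂ : p 2 <;> cases h₃ : p 3 <;>
    simp [Fin.sum_univ_four, h₀, h₁, h₂, h₃, hortonMult] at hp ⊢ <;> field_simp <;>
    first | exact hμ2 | exact hμ4 | exact Ne.symm hμ2 | exact Ne.symm hμ4

lemma prod_hortonMult_eq_one (hμ0 : μ ≠ 0) (hμ1 : μ ≠ 1) (h2 : (2 : K) ≠ 0)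
    {p : Fin 4 → Bool} (hp : ∑ i, (p i).toNat = 2) :
    ∏ i, hortonMult μ (p i) = 1 ∧ hortonDefect μ p ≠ 0 := by
  rw [Fin.prod_univ_four, hortonDefect]
  cases h₀ : p 0 <;> cases h₁ : p 1 <;> cases h₂ : p 2 <;> cases h₃ : p 3 <;>
    simp [Fin.sum_univ_four, h₀, h₁, h₂, h₃, hortonMult] at hp ⊢ <;> field_simp <;> grind

/-- A point of exact period two of `φ = τ_δ ∘ τ_γ` is determined by its pattern, since the
pattern fixes the slopes of the four affine steps (`alternating_affine_identity`). Balanced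
patterns are impossible, and rotating the square by two steps rotates the pattern, which rules
out the two constant patterns: 8 patterns remain. -/
theorem ncard_periodTwo_hortonAlternating_le (hμ0 : μ ≠ 0) (hμ2 : μ ^ 2 ≠ 1) (hμ4 : μ ^ 4 ≠ 1)
    (h2 : (2 : K) ≠ 0) {γ δ : K} (hγδ : γ ≠ δ) :
    {a | alternatingMap (hortonMap μ) (hortonMap μ) γ δ
        (alternatingMap (hortonMap μ) (hortonMap μ) γ δ a) = a ∧
      alternatingMap (hortonMap μ) (hortonMap μ) γ δ a ≠ a}.ncard ≤ 8 := by
  set φ := alternatingMap (hortonMap μ) (hortonMap μ) γ δ with hφ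
  set P := hortonPattern μ γ δ with hP
  have identity : ∀ a, φ (φ a) = a →
      (∏ i, hortonMult μ (P a i) - 1) * (a - γ) = (γ - δ) * hortonDefect μ (P a) := by
    intro a ha
    rw [Fin.prod_univ_four, hortonDefect]
    refine alternating_affine_identity (translateConj_hortonMap_sub μ γ a)
      (translateConj_hortonMap_sub μ δ _) (translateConj_hortonMap_sub μ γ _) ?_
    convert translateConj_hortonMap_sub μ δ (translateConj (hortonMap μ) γ (φ a)) using 2 <;>
      first | exact ha.symm | rfl
  have unbalanced : ∀ a, φ (φ a) = a → ∑ i, (P a i).toNat ≠ 2 := fun a ha hbal => by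
    obtain ⟨hprod, hdef⟩ := prod_hortonMult_eq_one hμ0 (fun h => hμ2 (by rw [h, one_pow])) h2 hbal
    have := identity a ha
    rw [hprod, sub_self, zero_mul] at this
    exact mul_ne_zero (sub_ne_zero.mpr hγδ) hdef this.symm
  have inj : ∀ a a', φ (φ a) = a → φ (φ a') = a' → P a = P a' → a = a' := by
    intro a a' ha ha' hPa
    have h₁ := identity a ha
    have h₂ := identity a' ha'
    rw [← hPa] at h₂
    exact sub_left_injective (mul_left_cancel₀
      (sub_ne_zero.mpr (prod_hortonMult_ne_one hμ0 hμ2 hμ4 (unbalanced a ha))) (h₁.trans h₂.symm))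
  have shift : ∀ a, φ (φ a) = a → P (φ a) = fun i => P a (i + 2) := by
    intro a ha
    funext i
    fin_cases i <;> simp [hP, hortonPattern, ← hφ, ha]
  calc _ ≤ ((Finset.univ.filter fun p : Fin 4 → Bool =>
        ∑ i, (p i).toNat ≠ 2 ∧ p ≠ fun i => p (i + 2)) : Set (Fin 4 → Bool)).ncard := by
        refine Set.ncard_le_ncard_of_injOn P (fun a ⟨ha, hfix⟩ => ?_)
          (fun a ha a' ha' => inj a a' ha.1 ha'.1)
        simp only [Finset.coe_filter, Finset.mem_univ, true_and]
        refine ⟨unbalanced a ha, fun hrot => hfix (inj _ _ (congrArg φ ha) ha ?_)⟩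
        rw [shift a ha, ← hrot]
    _ = 8 := by rw [Set.ncard_coe_finset]; decide

end HortonSquares

section HortonFourCycles

variable {K : Type*} [Field K] [Fintype K] {μ : K}

/-- No alternating square of `G_γ ∪ G_δ` passes through `∞`. -/
lemma hortonMap_hortonMap_sub_ne_neg (hμ : ¬IsSquare μ) (hneg : ¬IsSquare (-1 : K))
    (h3 : μ ^ 2 - μ + 1 ≠ 0) {u : K} (hu : u ≠ 0) :
    hortonMap μ (hortonMap μ u - u) ≠ -u := by
  have hμ0 : μ ≠ 0 := fun h => hμ (h ▸ IsSquare.zero)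
  have hμinv : ¬IsSquare μ⁻¹ := fun h => hμ (isSquare_inv.mp h)
  have cubic : (μ ^ 2 - μ + 1) * u ≠ 0 := mul_ne_zero h3 hu
  intro h
  by_cases hu' : IsSquare u
  · rw [hortonMap_of_isSquare hu'] at h
    by_cases hw : IsSquare (μ * u - u)
    · rw [hortonMap_of_isSquare hw] at h
      exact cubic (by linear_combination h)
    · rw [hortonMap_of_not_isSquare hw] at h
      have hw' : μ * u - u = -1 * (μ * u) := by field_simp at h ⊢; linear_combination h
      rw [hw', isSquare_mul_iff_of_not_isSquare (mul_ne_zero hμ0 hu) hneg,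
        isSquare_mul_iff_of_not_isSquare hu hμ, not_not] at hw
      exact hw hu'
  · rw [hortonMap_of_not_isSquare hu'] at h
    by_cases hw : IsSquare (μ⁻¹ * u - u)
    · rw [hortonMap_of_isSquare hw] at h
      have hw' : μ⁻¹ * u - u = -1 * (μ⁻¹ * u) := by field_simp at h ⊢; linear_combination h
      rw [hw', isSquare_mul_iff_of_not_isSquare (mul_ne_zero (inv_ne_zero hμ0) hu) hneg,
        isSquare_mul_iff_of_not_isSquare hu hμinv, not_not] at hw
      exact hu' hw
    · rw [hortonMap_of_not_isSquare hw] at h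
      exact cubic (by field_simp at h; linear_combination u * h)

theorem fourCycleCount_starterGraph_hortonMap_le_two [DecidableEq K] (hμ : ¬IsSquare μ)
    (hneg : ¬IsSquare (-1 : K)) (hμ1 : μ ≠ -1) (h3 : μ ^ 2 - μ + 1 ≠ 0) (h2 : (2 : K) ≠ 0)
    {γ δ : K} (hγδ : γ ≠ δ) :
    fourCycleCount (starterGraph (hortonMap μ) γ ⊔ starterGraph (hortonMap μ) δ) ≤ 2 := by
  have hσ := isStarterInvolution_hortonMap hμ hneg
  have hμ0 : μ ≠ 0 := fun h => hμ (h ▸ IsSquare.zero)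
  have hμ2 : μ ^ 2 ≠ 1 := fun h =>
    (sq_eq_one_iff.mp h).elim (fun h => hμ (h ▸ IsSquare.one)) hμ1
  have hμ4 : μ ^ 4 ≠ 1 := fun h => by
    rw [show μ ^ 4 = (μ ^ 2) ^ 2 by ring, sq_eq_one_iff] at h
    exact h.elim hμ2 fun h => hneg ⟨μ, by rw [← h]; ring⟩
  have hnone : ∀ s, IsFourCycleOn (starterGraph (hortonMap μ) γ ⊔ starterGraph (hortonMap μ) δ) s →
      none ∉ s := fun s hs hn => by
    obtain ⟨-, h⟩ := hs.translateConj_eq_of_none_mem hσ hσ hn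
    refine hortonMap_hortonMap_sub_ne_neg hμ hneg h3 (sub_ne_zero.mpr hγδ) ?_
    simp only [translateConj] at h
    rw [show hortonMap μ (γ - δ) - (γ - δ) = hortonMap μ (γ - δ) + δ - γ by ring]
    linear_combination h
  have hcount := four_mul_fourCycleCount_le
    (H := starterGraph (hortonMap μ) γ ⊔ starterGraph (hortonMap μ) δ)
    (pairwiseDisjoint_fourCycles_involutionGraph (hσ.starterInvolution_involutive γ)
      (hσ.starterInvolution_involutive δ))
    (C := some '' {a | alternatingMap (hortonMap μ) (hortonMap μ) γ δ
        (alternatingMap (hortonMap μ) (hortonMap μ) γ δ a) = a ∧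
      alternatingMap (hortonMap μ) (hortonMap μ) γ δ a ≠ a}) fun s hs v hv => by
    obtain ⟨a, rfl⟩ := Option.ne_none_iff_exists'.mp fun h => hnone s hs (h ▸ hv)
    exact ⟨a, hs.periodic_of_none_notMem hσ hσ (hnone s hs) hv, rfl⟩
  rw [Set.ncard_image_of_injective _ (Option.some_injective _)] at hcount
  have := ncard_periodTwo_hortonAlternating_le hμ0 hμ2 hμ4 h2 hγδ
  omega

end HortonFourCycles

section Transfer

variable {W : Type*}

def HasOrthogonalPairFewFourCycles (V : Type*) : Prop :=
  ∃ 𝓕 𝓖 : Set (SimpleGraph V), AreOrthogonalFactorizations 𝓕 𝓖 ∧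
    ∀ F ∈ 𝓕 ∪ 𝓖, ∀ G ∈ 𝓕 ∪ 𝓖, F ≠ G → fourCycleCount (F ⊔ G) ≤ 2

lemma IsOneFactor.comap_equiv {G : SimpleGraph V} (h : IsOneFactor G) (e : V ≃ W) :
    IsOneFactor (G.comap e.symm) := fun w =>
  (h (e.symm w)).exists.elim fun v hv => ⟨e v, by simpa using hv, fun w' hw' =>
    e.symm_apply_eq.mp ((h (e.symm w)).unique hw' hv)⟩

lemma edgeSet_comap_symm (e : V ≃ W) (G : SimpleGraph V) :
    (G.comap e.symm).edgeSet = Sym2.map e '' G.edgeSet := by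
  rw [show G.comap e.symm = G.map e.toEmbedding from G.comap_symm e, edgeSet_map]
  rfl

lemma IsOneFactorization.image_comap {𝓕 : Set (SimpleGraph V)} (h : IsOneFactorization 𝓕)
    (e : V ≃ W) : IsOneFactorization (SimpleGraph.comap e.symm '' 𝓕) := by
  obtain ⟨hone, hdisj, hcover⟩ := h
  refine ⟨?_, ?_, fun u v huv => ?_⟩
  · rintro _ ⟨G, hG, rfl⟩
    exact (hone G hG).comap_equiv e
  · rintro _ ⟨G, hG, rfl⟩ _ ⟨H, hH, rfl⟩ hne
    rw [edgeSet_comap_symm, edgeSet_comap_symm]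
    exact (Set.disjoint_image_iff (Sym2.map.injective e.injective)).mpr
      (hdisj G hG H hH fun h => hne (h ▸ rfl))
  · obtain ⟨G, hG, hadj⟩ := hcover (e.symm u) (e.symm v) (e.symm.injective.ne huv)
    exact ⟨_, ⟨G, hG, rfl⟩, hadj⟩

lemma fourCycleCount_comap_le [Finite V] {f : W → V} (hf : Injective f) (G : SimpleGraph V) :
    fourCycleCount (G.comap f) ≤ fourCycleCount G := by
  refine Set.ncard_le_ncard_of_injOn (f '' ·) ?_ (Set.image_injective.mpr hf).injOn
  rintro _ ⟨a, b, c, d, hab, hac, had, hbc, hbd, hcd, rfl, h₁, h₂, h₃, h₄⟩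
  exact ⟨f a, f b, f c, f d, hf.ne hab, hf.ne hac, hf.ne had, hf.ne hbc, hf.ne hbd, hf.ne hcd,
    by simp [Set.image_insert_eq], h₁, h₂, h₃, h₄⟩

lemma HasOrthogonalPairFewFourCycles.of_equiv [Finite V] (h : HasOrthogonalPairFewFourCycles V)
    (e : V ≃ W) : HasOrthogonalPairFewFourCycles W := by
  obtain ⟨𝓕, 𝓖, ⟨h𝓕, h𝓖, horth⟩, hcount⟩ := h
  refine ⟨SimpleGraph.comap e.symm '' 𝓕, SimpleGraph.comap e.symm '' 𝓖,
    ⟨h𝓕.image_comap e, h𝓖.image_comap e, ?_⟩, ?_⟩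
  · rintro _ ⟨F, hF, rfl⟩ _ ⟨G, hG, rfl⟩
    rw [edgeSet_comap_symm, edgeSet_comap_symm,
      ← Set.image_inter (Sym2.map.injective e.injective)]
    exact (horth F hF G hG).image _
  · rw [← Set.image_union]
    rintro _ ⟨F, hF, rfl⟩ _ ⟨G, hG, rfl⟩ hne
    exact (fourCycleCount_comap_le e.symm.injective (F ⊔ G)).trans
      (hcount F hF G hG fun h => hne (h ▸ rfl))

end Transfer

section Construction

variable {K : Type*} [Field K] [Fintype K] [DecidableEq K]

theorem hasOrthogonalPairFewFourCycles_option (h2 : ¬IsSquare (2 : K))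
    (hneg : ¬IsSquare (-1 : K)) (h3 : (3 : K) ≠ 0) :
    HasOrthogonalPairFewFourCycles (Option K) := by
  have h2' : (2 : K) ≠ 0 := fun h => h2 (h ▸ IsSquare.zero)
  have hμ1 : (2 : K) ≠ -1 := fun h => h3 (by linear_combination h)
  have hμ3 : (2 : K) ^ 2 - 2 + 1 ≠ 0 := by norm_num; exact h3
  have hF := isStarterInvolution_neg h2'
  have hG := isStrongStarterInvolution_hortonMap h2 hneg hμ1
  refine ⟨Set.range (starterGraph Neg.neg), Set.range (starterGraph (hortonMap 2)),
    ⟨hF.isOneFactorization_range_starterGraph,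
      hG.isOneFactorization_range_starterGraph, ?_⟩, ?_⟩
  · rintro _ ⟨γ, rfl⟩ _ ⟨δ, rfl⟩
    exact subsingleton_edgeSet_inter_starterGraph_neg hF hG γ δ
  · rintro _ (⟨γ, rfl⟩ | ⟨γ, rfl⟩) _ (⟨δ, rfl⟩ | ⟨δ, rfl⟩) hne
    · simp [fourCycleCount_starterGraph_neg_sup_neg h2' h3]
    · exact (fourCycleCount_starterGraph_neg_sup_le_one hF hG.toIsStarterInvolution γ δ).trans
        one_le_two
    · rw [sup_comm]
      exact (fourCycleCount_starterGraph_neg_sup_le_one hF hG.toIsStarterInvolution δ γ).trans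
        one_le_two
    · exact fourCycleCount_starterGraph_hortonMap_le_two h2 hneg hμ1 hμ3 h2'
        fun h => hne (h ▸ rfl)

omit [DecidableEq K] in
lemma three_ne_zero_of_card_mod_three (hK : Fintype.card K % 3 = 2) : (3 : K) ≠ 0 := by
  intro h
  obtain ⟨n, hp, hcard⟩ := FiniteField.card K (ringChar K)
  have : ringChar K ∣ 3 := (ringChar.spec K 3).mp (by exact_mod_cast h)
  rw [Nat.prime_dvd_prime_iff_eq hp Nat.prime_three] at this
  rw [hcard, this, Nat.pow_mod, Nat.mod_self, zero_pow n.ne_zero] at hK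
  exact absurd hK (by norm_num)

theorem hasOrthogonalPairFewFourCycles_of_card (hK : Fintype.card K % 24 = 11) :
    HasOrthogonalPairFewFourCycles (Option K) :=
  hasOrthogonalPairFewFourCycles_option (by rw [FiniteField.isSquare_two_iff]; omega)
    (by rw [FiniteField.isSquare_neg_one_iff]; omega) (three_ne_zero_of_card_mod_three (by omega))

end Construction

theorem statement_2_general (q : ℕ) (hq : IsPrimePow q) (hmod : q % 24 = 11) :
    ∃ 𝓕 𝓖 : Set (SimpleGraph (Fin (q + 1))),
      AreOrthogonalFactorizations 𝓕 𝓖 ∧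
        ∀ F ∈ 𝓕 ∪ 𝓖, ∀ G ∈ 𝓕 ∪ 𝓖, F ≠ G → fourCycleCount (F ⊔ G) ≤ 2 := by
  classical
  obtain ⟨p, n, hp, hn, rfl⟩ := hq
  have : Fact p.Prime := ⟨hp.nat_prime⟩
  let _ : Fintype (GaloisField p n) := Fintype.ofFinite _
  have hcard : Fintype.card (GaloisField p n) = p ^ n := by
    rw [← Nat.card_eq_fintype_card, GaloisField.card p n hn.ne']
  exact (hasOrthogonalPairFewFourCycles_of_card (hcard ▸ hmod)).of_equiv
    (Fintype.equivFinOfCardEq (by rw [Fintype.card_option, hcard]))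

/-- If `q ≡ 11 (mod 24)` is an odd prime power, then there is a pair
of orthogonal one-factorizations `𝓕`, `𝓖` of `K_{q+1}` such that for any two distinct
one-factors `F, G ∈ 𝓕 ∪ 𝓖`, the union `F ∪ G` contains at most two cycles of length
four. -/
theorem statement_2 (q : ℕ) (hq : IsPrimePow q) (hodd : Odd q) (hmod : q % 24 = 11) :
    ∃ 𝓕 𝓖 : Set (SimpleGraph (Fin (q + 1))),
      AreOrthogonalFactorizations 𝓕 𝓖 ∧
        ∀ F ∈ 𝓕 ∪ 𝓖, ∀ G ∈ 𝓕 ∪ 𝓖, F ≠ G → fourCycleCount (F ⊔ G) ≤ 2 :=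
  statement_2_general q hq hmod

end Paper
end

section
/- Let q ≡ 3 (mod 4) be an odd prime power with q ≠ 3, let y be a generator of the cyclic group QR(q), and let β ∈ NQR(q)\{−1}. Let {F_γ : γ ∈ F_q} be the one-factorization of the complete graph on F_q ∪ {∞} generated by the starter S_β. Then for every pair of distinct elements g, h ∈ F_q, the graph F_g ∪ F_h has the same cycle structure as the graph F_0 ∪ F_y; that is, F_g ∪ F_h and F_0 ∪ F_y are isomorphic graphs (the one-factorization generated by S_β is uniform). -/
open SimpleGraph

namespace Paper

variable {V : Type*} {Γ : Type*} {F : Type*}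

/-
A map `z ↦ a z + b` with `a` a nonzero square sends Horton's starter to itself, hence each
factor `F_γ` onto `F_{aγ+b}`, and so gives an isomorphism `F_g ∪ F_h ≅ F_{ag+b} ∪ F_{ah+b}`.
Since `q ≡ 3 (mod 4)`, `-1` is a non-square, so `d = h - g` or `d = g - h` is a nonzero
square; `a = y / d` and `b = -a g` (resp. `-a h`) then send `{g, h}` to `{0, y}`.
-/

section StarterFactor

variable [AddCommGroup Γ]

def affineOptionEquiv (σ : Γ ≃+ Γ) (b : Γ) : Option Γ ≃ Option Γ :=
  Equiv.optionCongr (σ.toEquiv.trans (Equiv.addRight b))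

lemma starterFactor_comap_affineOptionEquiv {S : Set (Sym2 Γ)} (σ : Γ ≃+ Γ)
    (hS : Sym2.map σ '' S = S) (b γ : Γ) :
    (starterFactor S (σ γ + b)).comap (affineOptionEquiv σ b) = starterFactor S γ := by
  have hinj : Function.Injective (Sym2.map (affineOptionEquiv σ b)) :=
    Sym2.map.injective (affineOptionEquiv σ b).injective
  have hedges : ({s(none, some (σ γ + b))} ∪ Sym2.map (fun x => some (x + (σ γ + b))) '' S) =
      Sym2.map (affineOptionEquiv σ b) ''
        ({s(none, some γ)} ∪ Sym2.map (fun x => some (x + γ)) '' S) := by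
    rw [Set.image_union, Set.image_singleton, Set.image_image]
    conv_lhs => rw [← hS, Set.image_image]
    congr 2
    funext e
    simp only [Sym2.map_map]
    congr 1
    funext x
    simp [affineOptionEquiv, add_assoc]
  ext u v
  simp only [starterFactor, comap_adj, fromEdgeSet_adj, hedges]
  rw [← Sym2.map_mk, hinj.mem_set_image, (affineOptionEquiv σ b).injective.ne_iff]

def starterFactorSupIso {S : Set (Sym2 Γ)} (σ : Γ ≃+ Γ) (hS : Sym2.map σ '' S = S)
    (b g h : Γ) :
    starterFactor S g ⊔ starterFactor S h ≃g
      starterFactor S (σ g + b) ⊔ starterFactor S (σ h + b) where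
  toEquiv := affineOptionEquiv σ b
  map_rel_iff' {u v} := by
    rw [← starterFactor_comap_affineOptionEquiv σ hS b g,
      ← starterFactor_comap_affineOptionEquiv σ hS b h]
    rfl

end StarterFactor

section Horton

variable [Field F]

lemma hortonStarter_image_mul_subset {a : F} (ha : a ≠ 0) (has : IsSquare a) (β : F) :
    Sym2.map (a * ·) '' hortonStarter β ⊆ hortonStarter β := by
  rintro _ ⟨_, ⟨x, hx0, hxs, rfl⟩, rfl⟩
  exact ⟨a * x, mul_ne_zero ha hx0, has.mul hxs, by simp [mul_assoc]⟩

lemma hortonStarter_image_mul {a : F} (ha : a ≠ 0) (has : IsSquare a) (β : F) :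
    Sym2.map (a * ·) '' hortonStarter β = hortonStarter β := by
  refine (hortonStarter_image_mul_subset ha has β).antisymm fun e he => ?_
  refine ⟨Sym2.map (a⁻¹ * ·) e,
    hortonStarter_image_mul_subset (inv_ne_zero ha) has.inv β ⟨e, he, rfl⟩, ?_⟩
  simp [Sym2.map_map, mul_inv_cancel_left₀ ha]

lemma nonempty_hortonFactor_sup_iso_of_isSquare_sub (β : F) {g h y : F} (hgh : g ≠ h)
    (hd : IsSquare (h - g)) (hy : y ∈ QRset F) :
    Nonempty ((starterFactor (hortonStarter β) g ⊔ starterFactor (hortonStarter β) h) ≃g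
      (starterFactor (hortonStarter β) 0 ⊔ starterFactor (hortonStarter β) y)) := by
  obtain ⟨hy0, hys⟩ := hy
  have hd0 : h - g ≠ 0 := sub_ne_zero.mpr hgh.symm
  set a := y / (h - g)
  have ha : a ≠ 0 := div_ne_zero hy0 hd0
  let σ := DistribMulAction.toAddEquiv₀ F a ha
  have iso := starterFactorSupIso σ (hortonStarter_image_mul ha (hys.div hd) β) (-(a * g)) g h
  have hσ (x : F) : σ x = a * x := rfl
  have hg : σ g + -(a * g) = 0 := by rw [hσ]; ring
  have hh : σ h + -(a * g) = y := by
    rw [hσ, ← sub_eq_add_neg, ← mul_sub]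
    exact div_mul_cancel₀ y hd0
  rw [hg, hh] at iso
  exact ⟨iso⟩

end Horton

lemma FiniteField.isSquare_or_isSquare_neg [Field F] [Fintype F] (hneg : ¬IsSquare (-1 : F))
    (x : F) : IsSquare x ∨ IsSquare (-x) := by
  classical
  refine or_iff_not_imp_left.mpr fun hx => ?_
  have hx0 : x ≠ 0 := by rintro rfl; exact hx IsSquare.zero
  rw [← quadraticChar_one_iff_isSquare (neg_ne_zero.mpr hx0), neg_eq_neg_one_mul, map_mul,
    quadraticChar_neg_one_iff_not_isSquare.mpr hneg, quadraticChar_neg_one_iff_not_isSquare.mpr hx]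
  norm_num

theorem statement_3_general {F : Type*} [Field F] [Fintype F] (q : ℕ)
    (hcard : Fintype.card F = q) (hq4 : q % 4 = 3)
    (y : F) (hy : y ∈ QRset F)
    (β : F)
    (g h : F) (hgh : g ≠ h) :
    Nonempty
      ((starterFactor (hortonStarter β) g ⊔ starterFactor (hortonStarter β) h) ≃g
        (starterFactor (hortonStarter β) 0 ⊔ starterFactor (hortonStarter β) y)) := by
  have hneg : ¬IsSquare (-1 : F) := by
    rw [FiniteField.isSquare_neg_one_iff, hcard, hq4]
    exact fun h3 => h3 rfl
  rcases FiniteField.isSquare_or_isSquare_neg hneg (h - g) with hd | hd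
  · exact nonempty_hortonFactor_sup_iso_of_isSquare_sub β hgh hd hy
  · rw [neg_sub] at hd
    rw [sup_comm]
    exact nonempty_hortonFactor_sup_iso_of_isSquare_sub β hgh.symm hd hy

/-- Let `q ≡ 3 (mod 4)` be an odd prime power, `q ≠ 3`, let `y` be a
generator of the cyclic group `QR(q)` and `β ∈ NQR(q) \ {-1}`. Then for any two
distinct `g, h ∈ F_q`, the graph `F_g ∪ F_h` of the one-factorization generated by the
starter `S_β` is isomorphic to `F_0 ∪ F_y` (the one-factorization is uniform). -/
theorem statement_3 {F : Type*} [Field F] [Fintype F] (q : ℕ)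
    (hcard : Fintype.card F = q) (hq4 : q % 4 = 3) (hq3 : q ≠ 3)
    (y : F) (hy : y ∈ QRset F) (hygen : ∀ x ∈ QRset F, ∃ n : ℕ, x = y ^ n)
    (β : F) (hβ : ¬ IsSquare β) (hβ1 : β ≠ -1)
    (g h : F) (hgh : g ≠ h) :
    Nonempty
      ((starterFactor (hortonStarter β) g ⊔ starterFactor (hortonStarter β) h) ≃g
        (starterFactor (hortonStarter β) 0 ⊔ starterFactor (hortonStarter β) y)) :=
  statement_3_general q hcard hq4 y hy β g h hgh

end Paper
end

section
/- Let q ≡ 3 (mod 4) be an odd prime power with q ≥ 11 and let β ∈ NQR(q)\{−1} satisfy β² − β + 1 = 0. Then the one-factorization {F_γ : γ ∈ F_q} of the complete graph on F_q ∪ {∞} generated by the starter S_β contains two distinct one-factors F, F' such that F ∪ F' contains a cycle C of length four with ∞ ∈ V(C). -/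
/-!
In `F_γ ∪ F_δ` the vertex `∞` is joined to `γ` and to `δ`, so a four-cycle through `∞` appears
as soon as some `u` is the `F_δ`-partner of `γ` and the `F_γ`-partner of `δ`. For `γ = 1`,
`δ = 0` and `u = β` this asks for the pairs `{1, β}` and `{β - 1, -1}` in `S_β`; the first is
`{x, xβ}` for `x = 1`, and since `β² = β - 1` and `β³ = -1` the second is `{x, xβ}` for `x = β²`.
-/

open SimpleGraph

namespace Paper

variable {V : Type*} {Γ : Type*} {F : Type*}

section StarterFactor

variable [AddCommGroup Γ] (S : Set (Sym2 Γ))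

lemma starterFactor_adj_none (γ : Γ) : (starterFactor S γ).Adj none (some γ) := by
  simp [starterFactor]

lemma starterFactor_adj_some {x y : Γ} (hxy : s(x, y) ∈ S) (hne : x ≠ y) (γ : Γ) :
    (starterFactor S γ).Adj (some (x + γ)) (some (y + γ)) := by
  rw [starterFactor, fromEdgeSet_adj]
  exact ⟨Or.inr ⟨s(x, y), hxy, by simp⟩, by simpa using hne⟩

lemma isFourCycleOn_starterFactor_sup {γ δ u : Γ} (hγδ : γ ≠ δ) (hγu : γ ≠ u) (huδ : u ≠ δ)
    (hδ : s(γ - δ, u - δ) ∈ S) (hγ : s(u - γ, δ - γ) ∈ S) :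
    IsFourCycleOn (starterFactor S γ ⊔ starterFactor S δ) {none, some γ, some u, some δ} := by
  refine ⟨none, some γ, some u, some δ, by simp, by simp, by simp, by simpa using hγu,
    by simpa using hγδ, by simpa using huδ, rfl, ?_, ?_, ?_, ?_⟩
  · exact Or.inl (starterFactor_adj_none S γ)
  · right
    simpa using starterFactor_adj_some S hδ (by simpa using hγu) δ
  · left
    simpa using starterFactor_adj_some S hγ (by simpa using huδ) γ
  · exact Or.inr (starterFactor_adj_none S δ).symm

end StarterFactor

lemma mem_hortonStarter [Field F] (β : F) {x : F} (hx : x ≠ 0) (hsq : IsSquare x) :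
    s(x, x * β) ∈ hortonStarter β :=
  ⟨x, hx, hsq, rfl⟩

theorem statement_4_general {F : Type*} [Field F]
    (β : F) (hroot : β ^ 2 - β + 1 = 0) :
    ∃ γ δ : F, γ ≠ δ ∧
      ∃ s : Set (Option F),
        IsFourCycleOn (starterFactor (hortonStarter β) γ ⊔ starterFactor (hortonStarter β) δ) s ∧
          none ∈ s := by
  have hβ_ne_zero : β ≠ 0 := by rintro rfl; norm_num at hroot
  have hβ_ne_one : β ≠ 1 := by rintro rfl; norm_num at hroot
  have hpair_one : s(1 - 0, β - 0) ∈ hortonStarter β := by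
    simpa using mem_hortonStarter β one_ne_zero IsSquare.one
  have hpair_sq : s(β - 1, 0 - 1) ∈ hortonStarter β := by
    have hsq : β ^ 2 = β - 1 := by linear_combination hroot
    have hcube : (β - 1) * β = 0 - 1 := by linear_combination hroot
    simpa only [hsq, hcube] using mem_hortonStarter β (pow_ne_zero 2 hβ_ne_zero) (IsSquare.sq β)
  exact ⟨1, 0, one_ne_zero, _, isFourCycleOn_starterFactor_sup _ one_ne_zero hβ_ne_one.symm
    hβ_ne_zero hpair_one hpair_sq, by simp⟩

/-- Let `q ≡ 3 (mod 4)` be an odd prime power with `q ≥ 11` and let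
`β ∈ NQR(q) \ {-1}` satisfy `β² - β + 1 = 0`. Then the one-factorization generated by
the starter `S_β` contains two distinct one-factors whose union contains a cycle `C`
of length four with `∞ ∈ V(C)`. -/
theorem statement_4 {F : Type*} [Field F] [Fintype F] (q : ℕ)
    (hcard : Fintype.card F = q) (hq4 : q % 4 = 3) (hq11 : 11 ≤ q)
    (β : F) (hβ : ¬ IsSquare β) (hβ1 : β ≠ -1) (hroot : β ^ 2 - β + 1 = 0) :
    ∃ γ δ : F, γ ≠ δ ∧
      ∃ s : Set (Option F),
        IsFourCycleOn (starterFactor (hortonStarter β) γ ⊔ starterFactor (hortonStarter β) δ) s ∧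
          none ∈ s :=
  statement_4_general β hroot

end Paper
end

section
/- Let q ≡ 3 (mod 8) be an odd prime power with q ≡ −1 (mod 12). If β ∈ NQR(q)\{−1} satisfies β − 1 ∈ NQR(q) and β² + 1 ∈ QR(q), then the one-factorization of the complete graph on F_q ∪ {∞} generated by the starter S_β is (1, C_4): the union of any two distinct one-factors of this one-factorization contains exactly one cycle of length four. -/
open SimpleGraph

namespace Paper

variable {V : Type*} {Γ : Type*} {F : Type*}

/-!
The factor `F_γ` is the graph of the fixed-point-free involution `hortonMate β γ` of `F ∪ {∞}`,
which swaps `∞ ↔ γ` and sends `v ≠ γ` to `γ + (v - γ) β` or `γ + (v - γ) / β` according as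
`v - γ` is a square or not. A four-cycle of `F_γ ∪ F_δ` therefore alternates between the two
factors: with `f, g` the involutions of `F_γ, F_δ`, it is the set `{a, f a, g f a, f g f a}` for
a point `a` with `(g f)² a = a ≠ g f a`, and these sets partition the set of such points.

Since `q ≡ 3 (mod 8)`, both `-1` and `2` are non-squares. Write `δ = γ + (β + 1) r`; exchanging
`γ` and `δ` changes the square class of `r`, so we may take `r` to be a non-square. Then
`γ + 2r ↦ γ + 2rβ ↦ γ + (β² + 1) r ↦ γ + (β² + 1) r / β ↦ γ + 2r` alternates `f, g, f, g`,
because `2`, `β - 1`, `-1` and `β` are non-squares and `β² + 1` is a square. Conversely `∞` is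
on no four-cycle (it would force `β - 1 = β²`), and replacing `a` by `f a` if necessary, `a - γ`
is a nonzero square `u`; the closing condition `(g f)² a = a` is then, for each choice of square
classes along the way, a linear equation for `u`, and the square classes of `β`, `β - 1`, `-1`,
`r` leave only `u = 2r` and `u = (β² + 1) r / β`, two vertices of the cycle above.
-/

section AlternatingFourCycles

variable {G H : SimpleGraph V} {f g : V → V} {a a₀ : V}

def fourCycleFrom (f g : V → V) (a : V) : Set V := {a, f a, g (f a), f (g (f a))}

def ClosesFourCycle (f g : V → V) (a : V) : Prop := g (f (g (f a))) = a ∧ g (f a) ≠ a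

lemma involutive_of_adj_iff (hG : ∀ u v, G.Adj u v ↔ v = f u) : Function.Involutive f :=
  fun u => ((hG _ _).mp ((hG u (f u)).mpr rfl).symm).symm

lemma ClosesFourCycle.apply_fst (hf : Function.Involutive f) (hg : Function.Involutive g)
    (h : ClosesFourCycle f g a) : ClosesFourCycle f g (f a) := by
  have hff : ∀ x, f (f x) = x := hf
  have hgg : ∀ x, g (g x) = x := hg
  obtain ⟨hcl, hne⟩ := h
  constructor <;> grind

lemma ClosesFourCycle.apply_snd_fst (h : ClosesFourCycle f g a) :
    ClosesFourCycle f g (g (f a)) :=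
  ⟨by rw [h.1], by rw [h.1]; exact h.2.symm⟩

lemma mem_fourCycleFrom_of_apply_fst (hf : Function.Involutive f)
    (h : f a ∈ fourCycleFrom f g a₀) : a ∈ fourCycleFrom f g a₀ := by
  have hff : ∀ x, f (f x) = x := hf
  simp only [fourCycleFrom, Set.mem_insert_iff, Set.mem_singleton_iff] at h ⊢
  grind

lemma fourCycleFrom_eq_of_mem (hf : Function.Involutive f) (hg : Function.Involutive g)
    (h₀ : ClosesFourCycle f g a₀) (ha : a ∈ fourCycleFrom f g a₀) :
    fourCycleFrom f g a = fourCycleFrom f g a₀ := by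
  have hff : ∀ x, f (f x) = x := hf
  have hgg : ∀ x, g (g x) = x := hg
  obtain ⟨hcl, -⟩ := h₀
  simp only [fourCycleFrom, Set.mem_insert_iff, Set.mem_singleton_iff] at ha
  ext x
  simp only [fourCycleFrom, Set.mem_insert_iff, Set.mem_singleton_iff]
  grind

lemma isFourCycleOn_sup_iff (hG : ∀ u v, G.Adj u v ↔ v = f u)
    (hH : ∀ u v, H.Adj u v ↔ v = g u) {s : Set V} :
    IsFourCycleOn (G ⊔ H) s ↔ ∃ a, ClosesFourCycle f g a ∧ s = fourCycleFrom f g a := by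
  have hff : ∀ x, f (f x) = x := involutive_of_adj_iff hG
  have hgg : ∀ x, g (g x) = x := involutive_of_adj_iff hH
  have hfx : ∀ x, f x ≠ x := fun x h => G.loopless.irrefl x ((hG x x).mpr h.symm)
  have hgx : ∀ x, g x ≠ x := fun x h => H.loopless.irrefl x ((hH x x).mpr h.symm)
  constructor
  · rintro ⟨a, b, c, d, hab, hac, had, hbc, hbd, hcd, rfl, h₁, h₂, h₃, h₄⟩
    simp only [sup_adj, hG, hH] at h₁ h₂ h₃ h₄
    rcases h₁ with rfl | rfl
    · exact ⟨a, by grind [ClosesFourCycle], by grind [fourCycleFrom]⟩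
    · refine ⟨g a, by grind [ClosesFourCycle], ?_⟩
      ext x
      simp only [fourCycleFrom, Set.mem_insert_iff, Set.mem_singleton_iff]
      grind
  · rintro ⟨a, ⟨hcl, hne⟩, rfl⟩
    refine ⟨a, f a, g (f a), f (g (f a)), ?_, ?_, ?_, ?_, ?_, ?_, rfl, ?_, ?_, ?_, ?_⟩ <;>
      simp only [sup_adj, hG, hH, ne_eq] <;> grind

lemma fourCycleCount_sup_eq_one (hG : ∀ u v, G.Adj u v ↔ v = f u)
    (hH : ∀ u v, H.Adj u v ↔ v = g u) (h₀ : ClosesFourCycle f g a₀)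
    (h : ∀ a, ClosesFourCycle f g a → a ∈ fourCycleFrom f g a₀) :
    fourCycleCount (G ⊔ H) = 1 := by
  rw [fourCycleCount, Set.ncard_eq_one]
  refine ⟨fourCycleFrom f g a₀, Set.ext fun s => ?_⟩
  rw [Set.mem_ofPred_eq, isFourCycleOn_sup_iff hG hH, Set.mem_singleton_iff]
  constructor
  · rintro ⟨a, ha, rfl⟩
    exact fourCycleFrom_eq_of_mem (involutive_of_adj_iff hG) (involutive_of_adj_iff hH) h₀
      (h a ha)
  · rintro rfl
    exact ⟨a₀, h₀, rfl⟩

end AlternatingFourCycles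

section SquareClasses

lemma ne_zero_of_not_isSquare {α : Type*} [MulZeroClass α] {a : α} (h : ¬IsSquare a) :
    a ≠ 0 := by
  rintro rfl
  exact h IsSquare.zero

variable [Field F] [Fintype F] [DecidableEq F]

lemma quadraticChar_inv (a : F) : quadraticChar F a⁻¹ = quadraticChar F a := by
  rw [← MulChar.inv_apply', (quadraticChar_isQuadratic F).inv]

lemma quadraticChar_div (a b : F) :
    quadraticChar F (a / b) = quadraticChar F a * quadraticChar F b := by
  rw [div_eq_mul_inv, map_mul, quadraticChar_inv]

lemma isSquare_of_quadraticChar_eq_one {a : F} (h : quadraticChar F a = 1) : IsSquare a :=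
  (quadraticChar_one_iff_isSquare fun ha => by simp [ha] at h).mp h

end SquareClasses

section HortonMate

variable [Field F] {β γ z v w : F}

open scoped Classical in
noncomputable def hortonPartner (β z : F) : F := if IsSquare z then z * β else z / β

open scoped Classical in
noncomputable def hortonMate (β γ : F) : Option F → Option F
  | none => some γ
  | some v => if v = γ then none else some (γ + hortonPartner β (v - γ))

lemma hortonPartner_of_isSquare (h : IsSquare z) : hortonPartner β z = z * β := by
  rw [hortonPartner, if_pos h]

lemma hortonPartner_of_not_isSquare (h : ¬IsSquare z) : hortonPartner β z = z / β := by
  rw [hortonPartner, if_neg h]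

lemma hortonPartner_cases (β z : F) :
    IsSquare z ∧ hortonPartner β z = z * β ∨ ¬IsSquare z ∧ hortonPartner β z = z / β := by
  by_cases h : IsSquare z
  · exact .inl ⟨h, hortonPartner_of_isSquare h⟩
  · exact .inr ⟨h, hortonPartner_of_not_isSquare h⟩

lemma hortonPartner_ne_self (hβ : ¬IsSquare β) (hz : z ≠ 0) : hortonPartner β z ≠ z := by
  have hβ₀ : β ≠ 0 := ne_zero_of_not_isSquare hβ
  have hβ₁ : β ≠ 1 := fun h => hβ (h ▸ IsSquare.one)
  intro h'
  by_cases h : IsSquare z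
  · rw [hortonPartner_of_isSquare h] at h'
    exact hβ₁ (mul_left_cancel₀ hz (h'.trans (mul_one z).symm))
  · rw [hortonPartner_of_not_isSquare h, div_eq_iff hβ₀] at h'
    exact hβ₁ (mul_left_cancel₀ hz (h'.symm.trans (mul_one z).symm))

lemma hortonMate_eq_none_iff {u : Option F} : hortonMate β γ u = none ↔ u = some γ := by
  cases u <;> simp [hortonMate]

lemma hortonMate_some_of_ne (h : v ≠ γ) :
    hortonMate β γ (some v) = some (γ + hortonPartner β (v - γ)) := by
  simp [hortonMate, h]

lemma sub_eq_hortonPartner_of_hortonMate_eq_some (h : hortonMate β γ (some v) = some w) :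
    w - γ = hortonPartner β (v - γ) := by
  by_cases hv : v = γ
  · simp [hortonMate, hv] at h
  · rw [hortonMate_some_of_ne hv, Option.some.injEq] at h
    rw [← h, add_sub_cancel_left]

lemma hortonMate_some_of_quadraticChar_eq_one [Fintype F] [DecidableEq F]
    (h : quadraticChar F (v - γ) = 1) : hortonMate β γ (some v) = some (γ + (v - γ) * β) := by
  rw [hortonMate_some_of_ne fun hv => by simp [hv] at h,
    hortonPartner_of_isSquare (isSquare_of_quadraticChar_eq_one h)]

lemma hortonMate_some_of_quadraticChar_eq_neg_one [Fintype F] [DecidableEq F]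
    (h : quadraticChar F (v - γ) = -1) : hortonMate β γ (some v) = some (γ + (v - γ) / β) := by
  rw [hortonMate_some_of_ne fun hv => by simp [hv] at h,
    hortonPartner_of_not_isSquare (quadraticChar_neg_one_iff_not_isSquare.mp h)]

variable [Fintype F]

lemma mem_hortonStarter_iff (hβ : ¬IsSquare β) {x y : F} :
    s(x, y) ∈ hortonStarter β ↔ x ≠ 0 ∧ y = hortonPartner β x := by
  classical
  have hβ₀ : β ≠ 0 := ne_zero_of_not_isSquare hβ
  have hχβ := quadraticChar_neg_one_iff_not_isSquare.mpr hβ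
  constructor
  · rintro ⟨x₀, hx₀, hsq, he⟩
    rcases Sym2.eq_iff.mp he with ⟨rfl, rfl⟩ | ⟨hx, hy⟩
    · exact ⟨hx₀, (hortonPartner_of_isSquare hsq).symm⟩
    · subst x y
      have hχ : quadraticChar F (x₀ * β) = -1 := by
        rw [map_mul, (quadraticChar_one_iff_isSquare hx₀).mpr hsq, hχβ, one_mul]
      refine ⟨mul_ne_zero hx₀ hβ₀, ?_⟩
      rw [hortonPartner_of_not_isSquare (quadraticChar_neg_one_iff_not_isSquare.mp hχ),
        mul_div_cancel_right₀ x₀ hβ₀]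
  · rintro ⟨hx, rfl⟩
    by_cases hsq : IsSquare x
    · exact ⟨x, hx, hsq, by rw [hortonPartner_of_isSquare hsq]⟩
    · refine ⟨x / β, div_ne_zero hx hβ₀, isSquare_of_quadraticChar_eq_one ?_, ?_⟩
      · rw [quadraticChar_div, quadraticChar_neg_one_iff_not_isSquare.mpr hsq, hχβ]
        norm_num
      · rw [hortonPartner_of_not_isSquare hsq, div_mul_cancel₀ x hβ₀, Sym2.eq_swap]

lemma mk_some_mem_image_hortonStarter_iff (hβ : ¬IsSquare β) {w : F} {v : Option F} :
    s(some w, v) ∈ Sym2.map (fun x => some (x + γ)) '' hortonStarter β ↔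
      w ≠ γ ∧ v = some (γ + hortonPartner β (w - γ)) := by
  constructor
  · rintro ⟨e, he, hmap⟩
    induction e using Sym2.ind with | _ x y => ?_
    rw [Sym2.map_mk, Sym2.eq_iff] at hmap
    rcases hmap with ⟨hx, rfl⟩ | ⟨rfl, hy⟩
    · obtain ⟨hx₀, rfl⟩ := (mem_hortonStarter_iff hβ).mp he
      obtain rfl := Option.some.inj hx
      simp [hx₀, add_comm]
    · obtain ⟨hy₀, rfl⟩ := (mem_hortonStarter_iff hβ).mp (Sym2.eq_swap ▸ he)
      obtain rfl := Option.some.inj hy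
      simp [hy₀, add_comm]
  · rintro ⟨hw, rfl⟩
    refine ⟨s(w - γ, hortonPartner β (w - γ)),
      (mem_hortonStarter_iff hβ).mpr ⟨sub_ne_zero.mpr hw, rfl⟩, ?_⟩
    simp [add_comm]

lemma starterFactor_hortonStarter_adj (hβ : ¬IsSquare β) {u v : Option F} :
    (starterFactor (hortonStarter β) γ).Adj u v ↔ v = hortonMate β γ u := by
  rw [starterFactor, fromEdgeSet_adj, Set.mem_union, Set.mem_singleton_iff]
  rcases u with _ | w
  · have hnone : s(none, v) ∉ Sym2.map (fun x => some (x + γ)) '' hortonStarter β := by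
      rintro ⟨e, -, he⟩
      obtain ⟨x, -, hx⟩ := Sym2.mem_map.mp (he ▸ Sym2.mem_mk_left none v)
      exact Option.some_ne_none _ hx
    simp only [hnone, or_false, Sym2.congr_right, hortonMate]
    exact ⟨And.left, fun h => ⟨h, by simp [h]⟩⟩
  · rw [mk_some_mem_image_hortonStarter_iff hβ, hortonMate]
    by_cases hw : w = γ
    · subst w
      rw [Sym2.eq_swap, Sym2.congr_left, if_pos rfl]
      exact ⟨fun h => h.1.resolve_right fun h' => h'.1 rfl, fun h => ⟨.inl h, by simp [h]⟩⟩
    · have hinf : s(some w, v) ≠ s(none, some γ) := fun h =>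
        (Sym2.eq_iff.mp h).elim (fun h' => Option.some_ne_none w h'.1)
          fun h' => hw (Option.some.inj h'.1)
      simp only [hinf, false_or, if_neg hw]
      refine ⟨fun h => h.1.2, fun h => ⟨⟨hw, h⟩, ?_⟩⟩
      rw [h, ne_eq, Option.some.injEq]
      exact fun h' =>
        hortonPartner_ne_self hβ (sub_ne_zero.mpr hw) (by linear_combination h'.symm)

lemma hortonMate_involutive (hβ : ¬IsSquare β) : Function.Involutive (hortonMate β γ) :=
  involutive_of_adj_iff fun _ _ => starterFactor_hortonStarter_adj hβ

end HortonMate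

section HortonFourCycle

variable [Field F] [Fintype F] {β γ δ r : F}

lemma not_closesFourCycle_hortonMate_none (hβ : ¬IsSquare β) (hβ₁ : ¬IsSquare (β - 1))
    (hm : ¬IsSquare (-1 : F)) (hγδ : γ ≠ δ) :
    ¬ClosesFourCycle (hortonMate β γ) (hortonMate β δ) none := by
  classical
  rintro ⟨hcl, -⟩
  have hmates : hortonMate β δ (some γ) = hortonMate β γ (some δ) := by
    rw [← hortonMate_eq_none_iff.mp hcl, hortonMate_involutive hβ]
    rfl
  rw [hortonMate_some_of_ne hγδ, hortonMate_some_of_ne hγδ.symm, Option.some.injEq] at hmates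
  have hβ₀ : β ≠ 0 := ne_zero_of_not_isSquare hβ
  have ht : δ - γ ≠ 0 := sub_ne_zero.mpr hγδ.symm
  have hχ : quadraticChar F (γ - δ) = -quadraticChar F (δ - γ) := by
    rw [show γ - δ = -1 * (δ - γ) by ring, map_mul,
      quadraticChar_neg_one_iff_not_isSquare.mpr hm, neg_one_mul]
  have key : (δ - γ) * (β ^ 2 - β + 1) = 0 := by
    rcases hortonPartner_cases β (δ - γ) with ⟨s, e⟩ | ⟨s, e⟩
    · rw [(quadraticChar_one_iff_isSquare ht).mpr s] at hχ
      rw [e, hortonPartner_of_not_isSquare (quadraticChar_neg_one_iff_not_isSquare.mp hχ)]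
        at hmates
      field_simp at hmates
      linear_combination -hmates
    · rw [quadraticChar_neg_one_iff_not_isSquare.mpr s, neg_neg] at hχ
      rw [e, hortonPartner_of_isSquare (isSquare_of_quadraticChar_eq_one hχ)] at hmates
      field_simp at hmates
      linear_combination -hmates
  exact hβ₁ ⟨β, by linear_combination -(mul_eq_zero.mp key).resolve_left ht⟩

lemma exists_eq_some_of_closesFourCycle_hortonMate (hβ : ¬IsSquare β)
    (hβ₁ : ¬IsSquare (β - 1)) (hm : ¬IsSquare (-1 : F)) (hβn : β ≠ -1) (hr : ¬IsSquare r)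
    {a : Option F} (ha : ClosesFourCycle (hortonMate β γ) (hortonMate β (γ + (β + 1) * r)) a) :
    ∃ v, a = some v := by
  have hγδ : γ ≠ γ + (β + 1) * r := fun h => mul_ne_zero
    (fun h' => hβn (eq_neg_of_add_eq_zero_left h')) (ne_zero_of_not_isSquare hr)
    (add_eq_left.mp h.symm)
  exact Option.ne_none_iff_exists'.mp fun h =>
    not_closesFourCycle_hortonMate_none hβ hβ₁ hm hγδ (h ▸ ha)

lemma hortonMate_fourCycle_vertices (hβ : ¬IsSquare β) (hβ₁ : ¬IsSquare (β - 1))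
    (hm : ¬IsSquare (-1 : F)) (h2 : ¬IsSquare (2 : F)) (hβ₂ : β ^ 2 + 1 ∈ QRset F)
    (hr : ¬IsSquare r) :
    hortonMate β γ (some (γ + 2 * r)) = some (γ + 2 * r * β) ∧
    hortonMate β (γ + (β + 1) * r) (some (γ + 2 * r * β)) = some (γ + (β ^ 2 + 1) * r) ∧
    hortonMate β γ (some (γ + (β ^ 2 + 1) * r)) = some (γ + (β ^ 2 + 1) * r / β) ∧
    hortonMate β (γ + (β + 1) * r) (some (γ + (β ^ 2 + 1) * r / β)) = some (γ + 2 * r) := by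
  classical
  have hβ₀ : β ≠ 0 := ne_zero_of_not_isSquare hβ
  have hχβ := quadraticChar_neg_one_iff_not_isSquare.mpr hβ
  have hχβ₁ := quadraticChar_neg_one_iff_not_isSquare.mpr hβ₁
  have hχm := quadraticChar_neg_one_iff_not_isSquare.mpr hm
  have hχ2 := quadraticChar_neg_one_iff_not_isSquare.mpr h2
  have hχr := quadraticChar_neg_one_iff_not_isSquare.mpr hr
  have hχβ₂ := (quadraticChar_one_iff_isSquare hβ₂.1).mpr hβ₂.2
  refine ⟨?_, ?_, ?_, ?_⟩
  · rw [hortonMate_some_of_quadraticChar_eq_one (by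
      rw [add_sub_cancel_left, map_mul, hχ2, hχr]; norm_num), add_sub_cancel_left]
  · rw [hortonMate_some_of_quadraticChar_eq_one (by
      rw [show γ + 2 * r * β - (γ + (β + 1) * r) = (β - 1) * r by ring, map_mul, hχβ₁, hχr]
      norm_num)]
    congr 1
    ring
  · rw [hortonMate_some_of_quadraticChar_eq_neg_one (by
      rw [add_sub_cancel_left, map_mul, hχβ₂, hχr]; norm_num), add_sub_cancel_left]
  · rw [hortonMate_some_of_quadraticChar_eq_one (by
      rw [show γ + (β ^ 2 + 1) * r / β - (γ + (β + 1) * r) = -1 * (β - 1) * r / β by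
        field_simp; ring, quadraticChar_div, map_mul, map_mul, hχm, hχβ₁, hχr, hχβ]
      norm_num)]
    congr 1
    field_simp
    ring

/- For the next two lemmas: `u = a - γ` is a nonzero square, so `f a = γ + u β`; `x₂ = c - γ` and
`x₃ = d - γ` for `c = g (f a)` and `d = f c`, where `δ = γ + (β + 1) r`. The square class of
`f a - δ = u β - (β + 1) r` decides which vertex of the cycle `a` is. -/

lemma eq_two_mul_of_hortonPartner_chain (hβ : ¬IsSquare β) (hβ₁ : ¬IsSquare (β - 1))
    (hβ₂ : β ^ 2 + 1 ≠ 0) (hβn : β ≠ -1) (hr : ¬IsSquare r) {u x₂ x₃ : F} (hu : u ≠ 0)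
    (hsq : IsSquare u) (hsq₂ : IsSquare (u * β - (β + 1) * r))
    (h₂ : x₂ = (β + 1) * r + hortonPartner β (u * β - (β + 1) * r))
    (h₃ : x₃ = hortonPartner β x₂)
    (h₄ : u = (β + 1) * r + hortonPartner β (x₃ - (β + 1) * r))
    (hne : x₂ ≠ u) :
    u = 2 * r := by
  classical
  have hβ₀ : β ≠ 0 := ne_zero_of_not_isSquare hβ
  have hβm : β - 1 ≠ 0 := ne_zero_of_not_isSquare hβ₁
  have hβp : β + 1 ≠ 0 := fun h => hβn (eq_neg_of_add_eq_zero_left h)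
  rw [hortonPartner_of_isSquare hsq₂] at h₂
  subst x₂
  rcases hortonPartner_cases β ((β + 1) * r + (u * β - (β + 1) * r) * β) with
    ⟨-, e₃⟩ | ⟨-, e₃⟩ <;>
    rcases hortonPartner_cases β (x₃ - (β + 1) * r) with ⟨-, e₄⟩ | ⟨-, e₄⟩ <;>
    rw [e₃] at h₃ <;> rw [e₄] at h₄ <;> subst x₃
  · have key : (β ^ 2 + 1) * ((β + 1) * r + (u * β - (β + 1) * r) * β - u) = 0 := by
      linear_combination -h₄
    exact absurd (sub_eq_zero.mp ((mul_eq_zero.mp key).resolve_left hβ₂)) hne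
  · have key : (u * β - r * (β - 1)) * ((β - 1) * (β + 1)) = 0 := by
      field_simp at h₄
      linear_combination -h₄
    have h := congrArg (quadraticChar F)
      (sub_eq_zero.mp ((mul_eq_zero.mp key).resolve_right (mul_ne_zero hβm hβp)))
    rw [map_mul, map_mul, (quadraticChar_one_iff_isSquare hu).mpr hsq,
      quadraticChar_neg_one_iff_not_isSquare.mpr hβ,
      quadraticChar_neg_one_iff_not_isSquare.mpr hr,
      quadraticChar_neg_one_iff_not_isSquare.mpr hβ₁] at h
    norm_num at h
  · have key : u * (β - 1) * (β + 1) = 2 * r * (β - 1) * (β + 1) := by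
      field_simp at h₄
      linear_combination -h₄
    exact mul_right_cancel₀ hβm (mul_right_cancel₀ hβp key)
  · have key : (β + 1) * r * (β - 1) ^ 2 = 0 := by
      field_simp at h₄
      linear_combination -h₄
    simp [hβp, ne_zero_of_not_isSquare hr, hβm] at key

lemma eq_div_of_hortonPartner_chain (hβ : ¬IsSquare β) (hβ₁ : ¬IsSquare (β - 1))
    (hm : ¬IsSquare (-1 : F)) (hβn : β ≠ -1) (hr : ¬IsSquare r) {u x₂ x₃ : F} (hu : u ≠ 0)
    (hsq : IsSquare u) (hsq₂ : ¬IsSquare (u * β - (β + 1) * r))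
    (h₂ : x₂ = (β + 1) * r + hortonPartner β (u * β - (β + 1) * r))
    (h₃ : x₃ = hortonPartner β x₂)
    (h₄ : u = (β + 1) * r + hortonPartner β (x₃ - (β + 1) * r)) :
    u = (β ^ 2 + 1) * r / β := by
  classical
  have hβ₀ : β ≠ 0 := ne_zero_of_not_isSquare hβ
  have hr₀ : r ≠ 0 := ne_zero_of_not_isSquare hr
  have hβm : β - 1 ≠ 0 := ne_zero_of_not_isSquare hβ₁
  have hβp : β + 1 ≠ 0 := fun h => hβn (eq_neg_of_add_eq_zero_left h)
  rw [hortonPartner_of_not_isSquare hsq₂] at h₂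
  subst x₂
  rcases hortonPartner_cases β ((β + 1) * r + (u * β - (β + 1) * r) / β) with
    ⟨-, e₃⟩ | ⟨-, e₃⟩ <;>
    rcases hortonPartner_cases β (x₃ - (β + 1) * r) with ⟨-, e₄⟩ | ⟨-, e₄⟩ <;>
    rw [e₃] at h₃ <;> rw [e₄] at h₄ <;> subst x₃
  · have key : (u + r * (β - 1)) * ((β - 1) * (β + 1)) = 0 := by
      field_simp at h₄
      linear_combination -h₄
    have h := congrArg (quadraticChar F) (eq_neg_of_add_eq_zero_left
      ((mul_eq_zero.mp key).resolve_right (mul_ne_zero hβm hβp)))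
    rw [neg_eq_neg_one_mul, map_mul, map_mul, (quadraticChar_one_iff_isSquare hu).mpr hsq,
      quadraticChar_neg_one_iff_not_isSquare.mpr hm,
      quadraticChar_neg_one_iff_not_isSquare.mpr hr,
      quadraticChar_neg_one_iff_not_isSquare.mpr hβ₁] at h
    norm_num at h
  · have key : 2 * (β + 1) * r * (β - 1) = 0 := by
      field_simp at h₄
      linear_combination -h₄
    have h2 : (2 : F) ≠ 0 := fun h => hm ⟨1, by linear_combination -h⟩
    simp [h2, hβp, hr₀, hβm] at key
  · have key : (β + 1) * r * (β - 1) ^ 2 = 0 := by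
      field_simp at h₄
      linear_combination h₄
    simp [hβp, hr₀, hβm] at key
  · have key : u * β * (β - 1) * (β + 1) = (β ^ 2 + 1) * r * (β - 1) * (β + 1) := by
      field_simp at h₄
      linear_combination h₄
    exact eq_div_of_mul_eq hβ₀ (mul_right_cancel₀ hβm (mul_right_cancel₀ hβp key))

lemma mem_fourCycleFrom_hortonMate_of_isSquare (hβ : ¬IsSquare β)
    (hβ₁ : ¬IsSquare (β - 1)) (hm : ¬IsSquare (-1 : F)) (h2 : ¬IsSquare (2 : F))
    (hβ₂ : β ^ 2 + 1 ∈ QRset F) (hβn : β ≠ -1) (hr : ¬IsSquare r) {v : F}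
    (ha : ClosesFourCycle (hortonMate β γ) (hortonMate β (γ + (β + 1) * r)) (some v))
    (hsq : IsSquare (v - γ)) :
    some v ∈
      fourCycleFrom (hortonMate β γ) (hortonMate β (γ + (β + 1) * r)) (some (γ + 2 * r)) := by
  have hf := hortonMate_involutive (γ := γ) hβ
  have hg := hortonMate_involutive (γ := γ + (β + 1) * r) hβ
  have hsome := fun {a} =>
    exists_eq_some_of_closesFourCycle_hortonMate (a := a) (γ := γ) hβ hβ₁ hm hβn hr
  obtain ⟨v₁, h₁⟩ := hsome (ha.apply_fst hf hg)
  obtain ⟨v₂, h₂⟩ := hsome ha.apply_snd_fst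
  obtain ⟨v₃, h₃⟩ := hsome (ha.apply_snd_fst.apply_fst hf hg)
  obtain ⟨hcl, hne⟩ := ha
  rw [h₁] at h₂ h₃ hcl hne
  rw [h₂] at h₃ hcl hne
  rw [h₃] at hcl
  have hv : v - γ ≠ 0 := fun h => by
    rw [hortonMate_eq_none_iff.mpr (by rw [sub_eq_zero.mp h])] at h₁
    exact Option.some_ne_none v₁ h₁.symm
  have e₁ := sub_eq_hortonPartner_of_hortonMate_eq_some h₁
  rw [hortonPartner_of_isSquare hsq] at e₁
  have e₂ : v₂ - γ = (β + 1) * r + hortonPartner β ((v - γ) * β - (β + 1) * r) := by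
    rw [← e₁, show v₁ - γ - (β + 1) * r = v₁ - (γ + (β + 1) * r) by ring,
      ← sub_eq_hortonPartner_of_hortonMate_eq_some h₂]
    ring
  have e₃ := sub_eq_hortonPartner_of_hortonMate_eq_some h₃
  have e₄ : v - γ = (β + 1) * r + hortonPartner β (v₃ - γ - (β + 1) * r) := by
    rw [show v₃ - γ - (β + 1) * r = v₃ - (γ + (β + 1) * r) by ring,
      ← sub_eq_hortonPartner_of_hortonMate_eq_some hcl]
    ring
  obtain ⟨k₁, k₂, k₃, -⟩ := hortonMate_fourCycle_vertices (γ := γ) hβ hβ₁ hm h2 hβ₂ hr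
  rw [fourCycleFrom, k₁, k₂, k₃]
  by_cases hsq₂ : IsSquare ((v - γ) * β - (β + 1) * r)
  · have hu := eq_two_mul_of_hortonPartner_chain hβ hβ₁ hβ₂.1 hβn hr hv hsq hsq₂ e₂ e₃ e₄
      fun h => hne (by rw [sub_left_inj.mp h])
    exact .inl (by rw [← hu, add_sub_cancel])
  · have hu := eq_div_of_hortonPartner_chain hβ hβ₁ hm hβn hr hv hsq hsq₂ e₂ e₃ e₄
    exact .inr (.inr (.inr (by rw [← hu, add_sub_cancel]; rfl)))

lemma mem_fourCycleFrom_hortonMate (hβ : ¬IsSquare β) (hβ₁ : ¬IsSquare (β - 1))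
    (hm : ¬IsSquare (-1 : F)) (h2 : ¬IsSquare (2 : F)) (hβ₂ : β ^ 2 + 1 ∈ QRset F)
    (hβn : β ≠ -1) (hr : ¬IsSquare r) {a : Option F}
    (ha : ClosesFourCycle (hortonMate β γ) (hortonMate β (γ + (β + 1) * r)) a) :
    a ∈ fourCycleFrom (hortonMate β γ) (hortonMate β (γ + (β + 1) * r)) (some (γ + 2 * r)) := by
  classical
  obtain ⟨v, rfl⟩ := exists_eq_some_of_closesFourCycle_hortonMate hβ hβ₁ hm hβn hr ha
  by_cases hsq : IsSquare (v - γ)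
  · exact mem_fourCycleFrom_hortonMate_of_isSquare hβ hβ₁ hm h2 hβ₂ hβn hr ha hsq
  · have hf := hortonMate_involutive (γ := γ) hβ
    have hfa : hortonMate β γ (some v) = some (γ + (v - γ) / β) := by
      rw [hortonMate_some_of_ne fun h => hsq (by rw [h, sub_self]; exact IsSquare.zero),
        hortonPartner_of_not_isSquare hsq]
    apply mem_fourCycleFrom_of_apply_fst hf
    rw [hfa]
    refine mem_fourCycleFrom_hortonMate_of_isSquare hβ hβ₁ hm h2 hβ₂ hβn hr
      (hfa ▸ ha.apply_fst hf (hortonMate_involutive hβ)) (isSquare_of_quadraticChar_eq_one ?_)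
    rw [add_sub_cancel_left, quadraticChar_div, quadraticChar_neg_one_iff_not_isSquare.mpr hsq,
      quadraticChar_neg_one_iff_not_isSquare.mpr hβ]
    norm_num

theorem fourCycleCount_starterFactor_hortonStarter_sup (hβ : ¬IsSquare β)
    (hβ₁ : ¬IsSquare (β - 1)) (hm : ¬IsSquare (-1 : F)) (h2 : ¬IsSquare (2 : F))
    (hβ₂ : β ^ 2 + 1 ∈ QRset F) (hβn : β ≠ -1) (hr : ¬IsSquare r) :
    fourCycleCount (starterFactor (hortonStarter β) γ ⊔
      starterFactor (hortonStarter β) (γ + (β + 1) * r)) = 1 := by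
  obtain ⟨k₁, k₂, k₃, k₄⟩ := hortonMate_fourCycle_vertices (γ := γ) hβ hβ₁ hm h2 hβ₂ hr
  refine fourCycleCount_sup_eq_one (fun _ _ => starterFactor_hortonStarter_adj hβ)
    (fun _ _ => starterFactor_hortonStarter_adj hβ) ⟨by rw [k₁, k₂, k₃, k₄], ?_⟩
    fun _ ha => mem_fourCycleFrom_hortonMate hβ hβ₁ hm h2 hβ₂ hβn hr ha
  rw [k₁, k₂, ne_eq, Option.some.injEq, add_right_inj]
  intro h
  have hβm : β - 1 ≠ 0 := ne_zero_of_not_isSquare hβ₁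
  have hβp : β + 1 ≠ 0 := fun h => hβn (eq_neg_of_add_eq_zero_left h)
  exact mul_ne_zero (mul_ne_zero hβm hβp) (ne_zero_of_not_isSquare hr) (by linear_combination h)

end HortonFourCycle

theorem statement_8_general {F : Type*} [Field F] [Fintype F] (q : ℕ)
    (hcard : Fintype.card F = q) (hq8 : q % 8 = 3)
    (β : F) (hβ : ¬ IsSquare β) (hβ1 : β ≠ -1)
    (hβm1 : ¬ IsSquare (β - 1)) (hβsq : β ^ 2 + 1 ∈ QRset F) :
    ∀ γ δ : F, γ ≠ δ →
      fourCycleCount (starterFactor (hortonStarter β) γ ⊔ starterFactor (hortonStarter β) δ) = 1 := by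
  classical
  intro γ δ hγδ
  have hm : ¬IsSquare (-1 : F) := by rw [FiniteField.isSquare_neg_one_iff, hcard]; omega
  have h2 : ¬IsSquare (2 : F) := by rw [FiniteField.isSquare_two_iff, hcard]; omega
  have hβp : β + 1 ≠ 0 := fun h => hβ1 (eq_neg_of_add_eq_zero_left h)
  have count := fun γ {r : F} (hr : ¬IsSquare r) =>
    fourCycleCount_starterFactor_hortonStarter_sup (γ := γ) hβ hβm1 hm h2 hβsq hβ1 hr
  by_cases hr : IsSquare ((δ - γ) / (β + 1))
  · have hr₀ : (δ - γ) / (β + 1) ≠ 0 := div_ne_zero (sub_ne_zero.mpr hγδ.symm) hβp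
    have hr' : ¬IsSquare ((γ - δ) / (β + 1)) := by
      rw [← quadraticChar_neg_one_iff_not_isSquare,
        show (γ - δ) / (β + 1) = -1 * ((δ - γ) / (β + 1)) by ring, map_mul,
        quadraticChar_neg_one_iff_not_isSquare.mpr hm,
        (quadraticChar_one_iff_isSquare hr₀).mpr hr, mul_one]
    rw [sup_comm, show γ = δ + (β + 1) * ((γ - δ) / (β + 1)) by field_simp; ring]
    exact count δ hr'
  · rw [show δ = γ + (β + 1) * ((δ - γ) / (β + 1)) by field_simp; ring]
    exact count γ hr

/-- Let `q ≡ 3 (mod 8)` be an odd prime power with `q ≡ -1 (mod 12)`.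
If `β ∈ NQR(q) \ {-1}` satisfies `β - 1 ∈ NQR(q)` and `β² + 1 ∈ QR(q)`, then the
one-factorization generated by the starter `S_β` is `(1, C₄)`: the union of any two
distinct one-factors contains exactly one cycle of length four. -/
theorem statement_8 {F : Type*} [Field F] [Fintype F] (q : ℕ)
    (hcard : Fintype.card F = q) (hq8 : q % 8 = 3) (hq12 : q % 12 = 11)
    (β : F) (hβ : ¬ IsSquare β) (hβ1 : β ≠ -1)
    (hβm1 : ¬ IsSquare (β - 1)) (hβsq : β ^ 2 + 1 ∈ QRset F) :
    ∀ γ δ : F, γ ≠ δ →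
      fourCycleCount (starterFactor (hortonStarter β) γ ⊔ starterFactor (hortonStarter β) δ) = 1 :=
  statement_8_general q hcard hq8 β hβ hβ1 hβm1 hβsq

end Paper
end

section
/- Let Γ be a finite additive abelian group of odd order n = 2k+1 and let S = {{x_i, y_i} : 1 ≤ i ≤ k} be a starter for Γ. For each γ ∈ Γ define F_γ = {{∞, γ}} ∪ {{x_i + γ, y_i + γ} : 1 ≤ i ≤ k}. Then {F_γ : γ ∈ Γ} is a one-factorization of the complete graph on the vertex set Γ ∪ {∞}: each F_γ is a perfect matching, distinct F_γ are edge-disjoint, and every edge of the complete graph lies in some F_γ. -/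
open SimpleGraph

namespace Paper

variable {V : Type*} {Γ : Type*} {F : Type*}

/-!
A vertex `some a` of `F_γ` with `a ≠ γ` is matched to `some (w + γ)`, where `{a - γ, w}` is the
unique pair of the starter containing `a - γ`; the vertex `some γ` is matched to `∞`. An edge
`{some a, some b}` lies in `F_γ` exactly when `{a - γ, b - γ} ∈ S`, and since `a - b` is the
difference of exactly one ordered pair of `S`, there is exactly one such `γ`.
In a finite group no pair of a starter is a loop `{z, z}`: sending a nonzero difference to the
first coordinate of its ordered pair is injective on the nonzero elements, hence onto.
-/

section Starter

variable [AddCommGroup Γ] {S : Set (Sym2 Γ)}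

theorem IsStarter.exists_mem_ne [Finite Γ] (hS : IsStarter S) {z : Γ} (hz : z ≠ 0) :
    ∃ w, s(z, w) ∈ S ∧ z ≠ w := by
  obtain ⟨hcover, hnonzero, hdiff⟩ := hS
  choose p hpS hpsub using fun d : {d : Γ // d ≠ 0} => (hdiff d.1 d.2).exists
  let fst : {d : Γ // d ≠ 0} → {d : Γ // d ≠ 0} :=
    fun d => ⟨(p d).1, hnonzero _ (hpS d) _ (Sym2.mem_mk_left _ _)⟩
  have hfst : Function.Injective fst := by
    intro d e hde
    replace hde : (p d).1 = (p e).1 := congrArg Subtype.val hde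
    have hpair : s((p d).1, (p d).2) = s((p e).1, (p e).2) :=
      (hcover _ (fst d).2).unique ⟨hpS d, Sym2.mem_mk_left _ _⟩
        ⟨hpS e, hde ▸ Sym2.mem_mk_left _ _⟩
    rw [hde, Sym2.congr_right] at hpair
    exact Subtype.ext <| by rw [← hpsub d, ← hpsub e, hde, hpair]
  obtain ⟨d, hd⟩ := (Finite.injective_iff_surjective.mp hfst) ⟨z, hz⟩
  replace hd : (p d).1 = z := congrArg Subtype.val hd
  refine ⟨(p d).2, hd ▸ hpS d, fun h => d.2 ?_⟩
  rw [← hpsub d, hd, ← h, sub_self]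

theorem IsStarter.eq_of_sub_eq (hS : IsStarter S) {x y x' y' : Γ} (hxy : s(x, y) ∈ S)
    (hxy' : s(x', y') ∈ S) (hne : x ≠ y) (hsub : x - y = x' - y') : x = x' ∧ y = y' :=
  Prod.ext_iff.mp <| (hS.2.2 (x - y) (sub_ne_zero.mpr hne)).unique (y₁ := (x, y))
    (y₂ := (x', y')) ⟨hxy, rfl⟩ ⟨hxy', hsub.symm⟩

theorem starterFactor_adj_some_some {γ a b : Γ} :
    (starterFactor S γ).Adj (some a) (some b) ↔ a ≠ b ∧ s(a - γ, b - γ) ∈ S := by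
  have htranslate : s(some a, some b) = Sym2.map (fun x => some (x + γ)) s(a - γ, b - γ) := by
    simp
  have hinj : Function.Injective (Sym2.map fun x : Γ => some (x + γ)) :=
    Sym2.map.injective ((Option.some_injective _).comp (add_left_injective γ))
  rw [starterFactor, fromEdgeSet_adj, Set.mem_union, htranslate, hinj.mem_set_image,
    ← htranslate]
  simp [and_comm]

theorem starterFactor_adj_none_some {γ b : Γ} :
    (starterFactor S γ).Adj none (some b) ↔ b = γ := by
  have hnone (e : Sym2 Γ) : none ∉ Sym2.map (fun x => some (x + γ)) e := by
    simp [Sym2.mem_map]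
  rw [starterFactor, fromEdgeSet_adj]
  constructor
  · rintro ⟨hγ | ⟨e, -, he⟩, -⟩
    · simpa using hγ
    · exact absurd (he ▸ Sym2.mem_mk_left _ _) (hnone e)
  · rintro rfl
    simp

theorem starterFactor_isOneFactor [Finite Γ] (hS : IsStarter S) (γ : Γ) :
    IsOneFactor (starterFactor S γ) := by
  rintro (_ | a)
  · refine ⟨some γ, starterFactor_adj_none_some.mpr rfl, ?_⟩
    rintro (_ | b) h
    · exact absurd rfl h.ne
    · rw [starterFactor_adj_none_some.mp h]
  by_cases ha : a = γ
  · subst ha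
    refine ⟨none, (starterFactor_adj_none_some.mpr rfl).symm, ?_⟩
    rintro (_ | b) h
    · rfl
    · rw [starterFactor_adj_some_some, sub_self] at h
      exact absurd rfl (hS.2.1 _ h.2 0 (Sym2.mem_mk_left _ _))
  have haγ : a - γ ≠ 0 := sub_ne_zero.mpr ha
  obtain ⟨w, hwS, hw⟩ := hS.exists_mem_ne haγ
  refine ⟨some (w + γ), starterFactor_adj_some_some.mpr ⟨?_, by simpa using hwS⟩, ?_⟩
  · rintro rfl
    simp at hw
  rintro (_ | b) h
  · exact absurd (starterFactor_adj_none_some.mp h.symm) ha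
  · have hb : s(a - γ, b - γ) = s(a - γ, w) := (hS.1 _ haγ).unique
      ⟨(starterFactor_adj_some_some.mp h).2, Sym2.mem_mk_left _ _⟩
      ⟨hwS, Sym2.mem_mk_left _ _⟩
    rw [← Sym2.congr_right.mp hb, sub_add_cancel]

theorem starterFactor_edgeSet_disjoint (hS : IsStarter S) {γ δ : Γ} (hγδ : γ ≠ δ) :
    Disjoint (starterFactor S γ).edgeSet (starterFactor S δ).edgeSet := by
  rw [Set.disjoint_left]
  rintro ⟨u, v⟩ hγ hδ
  rw [mem_edgeSet] at hγ hδ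
  rcases u with _ | a <;> rcases v with _ | b
  · exact hγ.ne rfl
  · exact hγδ <| (starterFactor_adj_none_some.mp hγ).symm.trans
      (starterFactor_adj_none_some.mp hδ)
  · exact hγδ <| (starterFactor_adj_none_some.mp hγ.symm).symm.trans
      (starterFactor_adj_none_some.mp hδ.symm)
  · obtain ⟨hab, hγS⟩ := starterFactor_adj_some_some.mp hγ
    obtain ⟨-, hδS⟩ := starterFactor_adj_some_some.mp hδ
    have hsub := hS.eq_of_sub_eq hγS hδS (by simpa using hab) (by abel)
    exact hγδ (sub_right_inj.mp hsub.1)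

theorem exists_starterFactor_adj (hS : IsStarter S) {u v : Option Γ} (huv : u ≠ v) :
    ∃ γ, (starterFactor S γ).Adj u v := by
  rcases u with _ | a <;> rcases v with _ | b
  · exact absurd rfl huv
  · exact ⟨b, starterFactor_adj_none_some.mpr rfl⟩
  · exact ⟨a, (starterFactor_adj_none_some.mpr rfl).symm⟩
  have hab : a ≠ b := fun h => huv (congrArg some h)
  obtain ⟨⟨x, y⟩, ⟨hxyS, hxy⟩, -⟩ := hS.2.2 (a - b) (sub_ne_zero.mpr hab)
  have hy : b - (a - x) = y := by
    rw [← sub_sub_cancel x y, hxy]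
    abel
  refine ⟨a - x, starterFactor_adj_some_some.mpr ⟨hab, ?_⟩⟩
  rwa [sub_sub_cancel, hy]

end Starter

theorem statement_17_general {Γ : Type*} [AddCommGroup Γ] [Fintype Γ] (S : Set (Sym2 Γ))
    (hS : IsStarter S) :
    (∀ γ : Γ, IsOneFactor (starterFactor S γ)) ∧
      (∀ γ δ : Γ, γ ≠ δ →
        Disjoint (starterFactor S γ).edgeSet (starterFactor S δ).edgeSet) ∧
      (∀ u v : Option Γ, u ≠ v → ∃ γ : Γ, (starterFactor S γ).Adj u v) :=
  ⟨starterFactor_isOneFactor hS, fun _ _ => starterFactor_edgeSet_disjoint hS,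
    fun _ _ => exists_starterFactor_adj hS⟩

/-- Let `Γ` be a finite additive abelian group of odd order
`n = 2k + 1` and let `S` be a starter for `Γ`. Then the translates
`F_γ = {{∞, γ}} ∪ {{x + γ, y + γ} : {x, y} ∈ S}`, for `γ ∈ Γ`, form a
one-factorization of the complete graph on `Γ ∪ {∞}`: each `F_γ` is a perfect
matching, distinct `F_γ` are edge-disjoint, and every edge of the complete graph
lies in some `F_γ`. -/
theorem statement_17 {Γ : Type*} [AddCommGroup Γ] [Fintype Γ] (k : ℕ)
    (hcard : Fintype.card Γ = 2 * k + 1) (S : Set (Sym2 Γ)) (hS : IsStarter S) :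
    (∀ γ : Γ, IsOneFactor (starterFactor S γ)) ∧
      (∀ γ δ : Γ, γ ≠ δ →
        Disjoint (starterFactor S γ).edgeSet (starterFactor S δ).edgeSet) ∧
      (∀ u v : Option Γ, u ≠ v → ∃ γ : Γ, (starterFactor S γ).Adj u v) :=
  statement_17_general S hS

end Paper
end
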